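/- arXiv:0909.0887 — 6 statements merged into one kernel-verified Lean document; each statement's English description precedes it below -/
import Mathlib

section
/- Fix an integer r ≥ 2, a constant c > 0, and a sequence p_n ∈ (0,1) such that n·p_n^{(r−1)/2} → c as n → ∞. Set λ = c^r / r!. Then for every integer k ≥ 0, the probability under the Erdős–Rényi random graph G(n,p_n) that N_r(Γ) = k converges, as n → ∞, to e^{−λ}·λ^k / k!. That is, the number of r-element complete subgraphs of a random graph converges in distribution to a Poisson random variable with mean λ. -/
open Finset Filter

noncomputable section

/-- The type of potential edges: unordered pairs of distinct vertices of `{1,…,n}`. -/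
def EdgeType (n : ℕ) : Type := {e : Sym2 (Fin n) // ¬ e.IsDiag}

instance (n : ℕ) : DecidableEq (EdgeType n) := Subtype.instDecidableEq
instance (n : ℕ) : Fintype (EdgeType n) := Subtype.fintype _

/-- A (simple) graph on the vertex set `{1,…,n}`, given by its set of edges. -/
abbrev RGraph (n : ℕ) := Finset (EdgeType n)

/-- The probability of the graph `Γ` under the Erdős–Rényi measure `G(n,p)`:
`p^{e(Γ)} (1-p)^{C(n,2) - e(Γ)}`. -/
def wt (n : ℕ) (p : ℝ) (Γ : RGraph n) : ℝ :=
  p ^ Γ.card * (1 - p) ^ (n.choose 2 - Γ.card)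

/-- `S` induces a complete subgraph of `Γ`: every pair of distinct vertices of `S`
is joined by an edge of `Γ`. -/
def IsCliqueIn (n : ℕ) (Γ : RGraph n) (S : Finset (Fin n)) : Prop :=
  ∀ v ∈ S, ∀ w ∈ S, ∀ h : v ≠ w,
    (⟨s(v, w), by simpa [Sym2.mk_isDiag_iff] using h⟩ : EdgeType n) ∈ Γ

/-- Expectation of `f` under `G(n,p)`. -/
def EV (n : ℕ) (p : ℝ) (f : RGraph n → ℝ) : ℝ := ∑ Γ : RGraph n, wt n p Γ * f Γ

open Classical in
/-- Probability of the event `A` under `G(n,p)`. -/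
def Pr (n : ℕ) (p : ℝ) (A : RGraph n → Prop) : ℝ :=
  ∑ Γ ∈ Finset.univ.filter A, wt n p Γ

open Classical in
/-- `N_r(Γ)`: the number of `r`-element vertex subsets inducing a complete subgraph of `Γ`. -/
def Nr (n r : ℕ) (Γ : RGraph n) : ℕ :=
  ((Finset.univ : Finset (Finset (Fin n))).filter
    (fun S => S.card = r ∧ IsCliqueIn n Γ S)).card

/-!
Write `N` for the number of `r`-cliques and `λ = c^r / r!`. The binomial moment `E[C(N, t)]` is
the sum, over families `A` of `t` distinct `r`-sets, of `p ^ e(A)`, where `e(A)` is the number of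
edges inside members of `A`. Families whose members pairwise share at most one vertex have
`e(A) = t C(r,2)` and contribute `C(C(n,r), t) p^{t C(r,2)} → λ^t / t!`, since
`C(n,r) p^{C(r,2)} → λ`. The remaining families contribute `o(1)`: built one `r`-set at a time, a
set meeting the vertices already used in `s` points brings at least `C(r,2) - C(s,2)` new edges,
and `n^{r-s} p^{C(r,2)-C(s,2)} = (n p^{(r-1)/2})^{r-s} p^{s(r-s)/2}` stays bounded, and tends to `0`
for the overlap `2 ≤ s ≤ r - 1` that every such family contains.

The Bonferroni inequalities bound `|P(N = k) - ∑_{j ≤ J} (-1)^j C(k+j,k) E[C(N,k+j)]|` by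
`C(k+J+1,k) E[C(N,k+J+1)]`; letting `n → ∞` and then `J → ∞` gives `e^{-λ} λ^k / k!`.
-/

namespace ErdosRenyi

open Topology

theorem sum_pow_mul_one_sub_pow_mul_ite_subset {α : Type*} [Fintype α] [DecidableEq α]
    (q : ℝ) (E : Finset α) :
    ∑ Γ : Finset α, q ^ #Γ * (1 - q) ^ (Fintype.card α - #Γ) * (if E ⊆ Γ then 1 else 0)
      = q ^ #E := by
  calc _ = ∑ Γ ∈ (univ : Finset α).powerset,
        (∏ _i ∈ Γ, q) * ∏ i ∈ univ \ Γ, (if i ∈ E then 0 else 1 - q) := by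
        rw [powerset_univ]
        refine sum_congr rfl fun Γ _ => ?_
        rw [prod_const, mul_assoc, ← compl_eq_univ_sdiff]
        split_ifs with h
        · rw [mul_one, prod_congr rfl fun i hi => if_neg fun hiE => mem_compl.1 hi (h hiE),
            prod_const, card_compl]
        · obtain ⟨i, hiE, hiΓ⟩ := not_subset.1 h
          rw [mul_zero, prod_eq_zero (mem_compl.2 hiΓ) (by simp [hiE]), mul_zero]
    _ = ∏ i, (q + if i ∈ E then 0 else 1 - q) := (prod_add _ _ _).symm
    _ = ∏ i, if i ∈ E then q else 1 := prod_congr rfl fun i _ => by split_ifs <;> ring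
    _ = q ^ #E := by rw [prod_ite_mem, univ_inter, prod_const]

theorem card_edgeType (n : ℕ) : Fintype.card (EdgeType n) = n.choose 2 := by
  have := Sym2.card_subtype_not_diag (α := Fin n)
  rwa [Fintype.card_fin] at this

theorem EV_ite_subset (n : ℕ) (q : ℝ) (E : RGraph n) :
    EV n q (fun Γ => if E ⊆ Γ then 1 else 0) = q ^ #E := by
  simpa [EV, wt, card_edgeType] using sum_pow_mul_one_sub_pow_mul_ite_subset q E

variable {n : ℕ}

def edgesWithin (S : Finset (Fin n)) : Finset (EdgeType n) :=
  S.sym2.subtype fun e : Sym2 (Fin n) => ¬ e.IsDiag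

theorem mem_edgesWithin {S : Finset (Fin n)} {e : EdgeType n} :
    e ∈ edgesWithin S ↔ ∀ a ∈ e.1, a ∈ S :=
  mem_subtype.trans mem_sym2_iff

theorem card_edgesWithin (S : Finset (Fin n)) : #(edgesWithin S) = (#S).choose 2 := by
  refine (card_subtype _ _).trans ?_
  rw [← Sym2.card_image_offDiag, ← Sym2.filter_image_mk_not_isDiag, sym2_eq_image]

theorem edgesWithin_inter (S T : Finset (Fin n)) :
    edgesWithin (S ∩ T) = edgesWithin S ∩ edgesWithin T := by
  ext e
  simp only [mem_inter, mem_edgesWithin, forall₂_and]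

theorem edgesWithin_mono {S T : Finset (Fin n)} (h : S ⊆ T) : edgesWithin S ⊆ edgesWithin T :=
  fun _ he => mem_edgesWithin.2 fun a ha => h (mem_edgesWithin.1 he a ha)

theorem isCliqueIn_iff_edgesWithin_subset {Γ : RGraph n} {S : Finset (Fin n)} :
    IsCliqueIn n Γ S ↔ edgesWithin S ⊆ Γ := by
  refine ⟨fun h e he => ?_, fun h v hv w hw hvw => h (mem_edgesWithin.2 fun a ha => ?_)⟩
  · obtain ⟨z, hz⟩ := e
    induction z using Sym2.ind with
    | _ a b =>
      have hab : a ≠ b := by simpa [Sym2.mk_isDiag_iff] using hz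
      exact h a (mem_edgesWithin.1 he a (Sym2.mem_mk_left a b)) b
        (mem_edgesWithin.1 he b (Sym2.mem_mk_right a b)) hab
  · rcases Sym2.mem_iff.1 ha with rfl | rfl <;> assumption

def cliqueEdges (A : Finset (Finset (Fin n))) : Finset (EdgeType n) := A.biUnion edgesWithin

def binomialMoment (n r t : ℕ) (q : ℝ) : ℝ :=
  ∑ A ∈ (powersetCard r (univ : Finset (Fin n))).powersetCard t, q ^ #(cliqueEdges A)

theorem choose_Nr_eq_card_filter (r t : ℕ) (Γ : RGraph n) :
    (Nr n r Γ).choose t =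
      #{A ∈ (powersetCard r (univ : Finset (Fin n))).powersetCard t | cliqueEdges A ⊆ Γ} := by
  have hNr : Nr n r Γ = #{S ∈ powersetCard r (univ : Finset (Fin n)) | edgesWithin S ⊆ Γ} := by
    simp only [Nr, isCliqueIn_iff_edgesWithin_subset]
    congr 1
    ext S
    simp
  rw [hNr, ← card_powersetCard]
  congr 1
  ext A
  simp only [mem_powersetCard, mem_filter, cliqueEdges, subset_iff]
  grind

theorem EV_choose_Nr (r t : ℕ) (q : ℝ) :
    EV n q (fun Γ => ((Nr n r Γ).choose t : ℝ)) = binomialMoment n r t q := by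
  simp only [choose_Nr_eq_card_filter, natCast_card_filter, binomialMoment,
    ← EV_ite_subset, EV, mul_sum]
  exact sum_comm

theorem choose_add_mul_choose (N k j : ℕ) :
    N.choose (k + j) * (k + j).choose k = N.choose k * (N - k).choose j := by
  rw [Nat.choose_mul (Nat.le_add_right k j), Nat.add_sub_cancel_left]

theorem abs_ite_eq_sub_sum_choose_le (N k J : ℕ) :
    |(if N = k then 1 else 0 : ℤ) -
        ∑ j ∈ range (J + 1), (-1 : ℤ) ^ j * (k + j).choose k * N.choose (k + j)|
      ≤ (k + J + 1).choose k * N.choose (k + J + 1) := by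
  have hsum : ∑ j ∈ range (J + 1), (-1 : ℤ) ^ j * (k + j).choose k * N.choose (k + j)
      = N.choose k * ∑ j ∈ range (J + 1), (-1 : ℤ) ^ j * ((N - k).choose j : ℤ) := by
    rw [mul_sum]
    refine sum_congr rfl fun j _ => ?_
    rw [mul_assoc, ← Nat.cast_mul, mul_comm ((k + j).choose k), choose_add_mul_choose]
    push_cast
    ring
  rcases lt_trichotomy N k with h | rfl | h
  · simp [hsum, Nat.choose_eq_zero_of_lt h, h.ne]
    positivity
  · simp [hsum, sum_range_succ']
    positivity
  · obtain ⟨m, rfl⟩ : ∃ m, N = k + m + 1 := ⟨N - k - 1, by omega⟩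
    have hm : k + m + 1 - k = m + 1 := by omega
    have htail := choose_add_mul_choose (k + m + 1) k (J + 1)
    rw [hm, ← add_assoc] at htail
    rw [hsum, hm, Int.alternating_sum_range_choose_eq_choose, if_neg (by omega), zero_sub,
      abs_neg, abs_mul, abs_mul, abs_pow, abs_neg, abs_one, one_pow, one_mul, Nat.abs_cast,
      Nat.abs_cast, mul_comm ((k + J + 1).choose k : ℤ)]
    have hle : m.choose J ≤ (m + 1).choose (J + 1) :=
      (Nat.le_add_right _ _).trans_eq (Nat.choose_succ_succ m J).symm
    exact_mod_cast htail ▸ Nat.mul_le_mul_left _ hle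

theorem wt_nonneg {q : ℝ} (hq0 : 0 ≤ q) (hq1 : q ≤ 1) (Γ : RGraph n) : 0 ≤ wt n q Γ := by
  have : 0 ≤ 1 - q := sub_nonneg.2 hq1
  unfold wt
  positivity

theorem abs_EV_le {q : ℝ} (hq0 : 0 ≤ q) (hq1 : q ≤ 1) {f g : RGraph n → ℝ}
    (h : ∀ Γ, |f Γ| ≤ g Γ) : |EV n q f| ≤ EV n q g :=
  (abs_sum_le_sum_abs _ _).trans <| sum_le_sum fun Γ _ => by
    rw [abs_mul, abs_of_nonneg (wt_nonneg hq0 hq1 Γ)]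
    exact mul_le_mul_of_nonneg_left (h Γ) (wt_nonneg hq0 hq1 Γ)

theorem EV_const_mul (q a : ℝ) (f : RGraph n → ℝ) :
    EV n q (fun Γ => a * f Γ) = a * EV n q f := by
  simp only [EV, mul_sum, mul_left_comm]

theorem abs_Pr_Nr_eq_sub_sum_le (r k J : ℕ) {q : ℝ} (hq0 : 0 ≤ q) (hq1 : q ≤ 1) :
    |Pr n q (fun Γ => Nr n r Γ = k) -
        ∑ j ∈ range (J + 1), (-1) ^ j * (k + j).choose k * binomialMoment n r (k + j) q|
      ≤ (k + J + 1).choose k * binomialMoment n r (k + J + 1) q := by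
  have hdiff : Pr n q (fun Γ => Nr n r Γ = k) -
        ∑ j ∈ range (J + 1), (-1) ^ j * (k + j).choose k * binomialMoment n r (k + j) q
      = EV n q (fun Γ => ((if Nr n r Γ = k then 1 else 0 : ℤ) - ∑ j ∈ range (J + 1),
          (-1 : ℤ) ^ j * (k + j).choose k * (Nr n r Γ).choose (k + j) : ℤ)) := by
    simp only [← EV_choose_Nr, EV, Pr, sum_filter, mul_sum]
    push_cast
    simp only [mul_sub, sum_sub_distrib, mul_sum, mul_ite, mul_one, mul_zero]
    rw [sum_comm]
    congr 1
    · exact sum_congr rfl fun _ _ => by congr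
    exact sum_congr rfl fun _ _ => sum_congr rfl fun _ _ => by ring
  rw [hdiff, ← EV_choose_Nr, ← EV_const_mul]
  exact abs_EV_le hq0 hq1 fun Γ => by exact_mod_cast abs_ite_eq_sub_sum_choose_le _ _ _

theorem sum_le_sum_comp_of_subset_image {ι κ M : Type*} [DecidableEq κ] [AddCommMonoid M]
    [PartialOrder M] [IsOrderedAddMonoid M] {s : Finset ι} {t : Finset κ} {g : ι → κ}
    {f : κ → M} (hf : ∀ b, 0 ≤ f b) (h : t ⊆ s.image g) : ∑ b ∈ t, f b ≤ ∑ a ∈ s, f (g a) :=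
  (sum_le_sum_of_subset_of_nonneg h fun _ _ _ => hf _).trans
    (sum_image_le_of_nonneg fun _ _ => hf _)

theorem card_inter_lt_of_ne {α : Type*} [DecidableEq α] {S T : Finset α} {r : ℕ}
    (hS : #S = r) (hT : #T = r) (h : S ≠ T) : #(S ∩ T) < r := by
  by_contra! hr
  have hST : S ∩ T = S := eq_of_subset_of_card_le inter_subset_left (by omega)
  have hTS : S ∩ T = T := eq_of_subset_of_card_le inter_subset_right (by omega)
  exact h (hST.symm.trans hTS)

section Overlaps

variable {r : ℕ} {A : Finset (Finset (Fin n))} {q : ℝ}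

def EdgeDisjoint (A : Finset (Finset (Fin n))) : Prop :=
  (A : Set (Finset (Fin n))).Pairwise fun S T => #(S ∩ T) ≤ 1

theorem card_cliqueEdges_le (hA : ∀ S ∈ A, #S = r) : #(cliqueEdges A) ≤ #A * r.choose 2 :=
  card_biUnion_le_card_mul _ _ _ fun S hS => by rw [card_edgesWithin, hA S hS]

theorem card_cliqueEdges_of_edgeDisjoint (hA : ∀ S ∈ A, #S = r) (hP : EdgeDisjoint A) :
    #(cliqueEdges A) = #A * r.choose 2 := by
  have hdisj : (A : Set (Finset (Fin n))).PairwiseDisjoint edgesWithin := hP.mono' fun _ _ h => by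
    rw [Function.onFun, disjoint_iff_inter_eq_empty, ← edgesWithin_inter, ← card_eq_zero,
      card_edgesWithin, Nat.choose_eq_zero_of_lt (by omega)]
  rw [cliqueEdges, card_biUnion hdisj, sum_congr rfl fun S hS => by rw [card_edgesWithin, hA S hS],
    sum_const, smul_eq_mul]

theorem cliqueEdges_subset_edgesWithin_biUnion :
    cliqueEdges A ⊆ edgesWithin (A.biUnion id) :=
  biUnion_subset.2 fun _ hS => edgesWithin_mono (subset_biUnion_of_mem id hS)

theorem card_cliqueEdges_insert_ge {S : Finset (Fin n)} (hS : #S = r) :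
    #(cliqueEdges A) + (r.choose 2 - (#(S ∩ A.biUnion id)).choose 2)
      ≤ #(cliqueEdges (insert S A)) := by
  have hshared : #(edgesWithin S ∩ cliqueEdges A) ≤ (#(S ∩ A.biUnion id)).choose 2 := by
    rw [← card_edgesWithin, edgesWithin_inter]
    exact card_le_card (inter_subset_inter_left cliqueEdges_subset_edgesWithin_biUnion)
  have hunion := card_union_add_card_inter (edgesWithin S) (cliqueEdges A)
  rw [card_edgesWithin, hS] at hunion
  have hmono := card_le_card (subset_union_right (s₁ := edgesWithin S) (s₂ := cliqueEdges A))
  rw [show cliqueEdges (insert S A) = edgesWithin S ∪ cliqueEdges A from biUnion_insert]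
  omega

theorem card_filter_card_inter_eq_le (U : Finset (Fin n)) (s : ℕ) :
    #{S ∈ powersetCard r (univ : Finset (Fin n)) | #(S ∩ U) = s}
      ≤ (#U).choose s * n.choose (r - s) := by
  calc _ ≤ #(U.powersetCard s ×ˢ (univ : Finset (Fin n)).powersetCard (r - s)) := by
        refine card_le_card_of_injOn (fun S => (S ∩ U, S \ U)) (fun S hS => ?_) ?_
        · simp only [coe_filter, mem_powersetCard_univ, Set.mem_ofPred_eq] at hS
          have := card_inter_add_card_sdiff S U
          simp only [coe_product, Set.mem_prod, mem_coe, mem_powersetCard, inter_subset_right,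
            subset_univ, true_and]
          omega
        · intro S _ T _ h
          simp only [Prod.mk.injEq] at h
          rw [← sdiff_union_inter S U, ← sdiff_union_inter T U, h.1, h.2]
    _ = _ := by rw [card_product, card_powersetCard, card_powersetCard, card_univ,
        Fintype.card_fin]

/-- At most `C(L,s) C(n,r-s)` of the `r`-sets meet a given set of `L` vertices in exactly `s`
points, and adding such a set to a family adds at least `C(r,2) - C(s,2)` edges. -/
def extensionSum (n r L a b : ℕ) (q : ℝ) : ℝ :=
  ∑ s ∈ Icc a b, (L.choose s * n.choose (r - s) : ℝ) * q ^ (r.choose 2 - s.choose 2)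

theorem sum_pow_card_cliqueEdges_insert_le (hq0 : 0 ≤ q) (hq1 : q ≤ 1) {L a b : ℕ}
    (hL : #(A.biUnion id) ≤ L) {F : Finset (Finset (Fin n))}
    (hF : F ⊆ powersetCard r univ) (hFab : ∀ S ∈ F, #(S ∩ A.biUnion id) ∈ Icc a b) :
    ∑ S ∈ F, q ^ #(cliqueEdges (insert S A))
      ≤ q ^ #(cliqueEdges A) * extensionSum n r L a b q := by
  set V := A.biUnion id
  have hfiber (s : ℕ) : #{S ∈ F | #(S ∩ V) = s} ≤ L.choose s * n.choose (r - s) :=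
    (card_le_card (filter_subset_filter _ hF)).trans <| (card_filter_card_inter_eq_le V s).trans <|
      Nat.mul_le_mul_right _ (Nat.choose_le_choose s hL)
  calc _ ≤ ∑ S ∈ F, q ^ #(cliqueEdges A) * q ^ (r.choose 2 - (#(S ∩ V)).choose 2) :=
        sum_le_sum fun S hS => by
          rw [← pow_add]
          exact pow_le_pow_of_le_one hq0 hq1
            (card_cliqueEdges_insert_ge (mem_powersetCard_univ.1 (hF hS)))
    _ = q ^ #(cliqueEdges A) *
          ∑ s ∈ Icc a b, (#{S ∈ F | #(S ∩ V) = s} : ℝ) * q ^ (r.choose 2 - s.choose 2) := by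
        rw [← mul_sum, ← sum_fiberwise_of_maps_to hFab]
        refine congrArg _ (sum_congr rfl fun s _ => ?_)
        rw [sum_congr rfl fun S hS => by rw [(mem_filter.1 hS).2], sum_const, nsmul_eq_mul]
    _ ≤ _ := by
        unfold extensionSum
        gcongr with s
        exact_mod_cast hfiber s

theorem choose_choose_mul_pow_le_binomialMoment (hq0 : 0 ≤ q) (hq1 : q ≤ 1) (t : ℕ) :
    ((n.choose r).choose t : ℝ) * q ^ (t * r.choose 2) ≤ binomialMoment n r t q := by
  have hcard :
      #((powersetCard r (univ : Finset (Fin n))).powersetCard t) = (n.choose r).choose t := by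
    simp
  rw [binomialMoment, ← hcard, ← nsmul_eq_mul]
  refine card_nsmul_le_sum _ _ _ fun A hA => pow_le_pow_of_le_one hq0 hq1 ?_
  obtain ⟨hAR, rfl⟩ := mem_powersetCard.1 hA
  exact card_cliqueEdges_le fun S hS => mem_powersetCard_univ.1 (hAR hS)

open Classical in
def overlappingFamilies (n r t : ℕ) : Finset (Finset (Finset (Fin n))) :=
  {A ∈ (powersetCard r (univ : Finset (Fin n))).powersetCard t | ¬ EdgeDisjoint A}

theorem mem_overlappingFamilies {t : ℕ} :
    A ∈ overlappingFamilies n r t ↔ (A ⊆ powersetCard r univ ∧ #A = t) ∧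
      ∃ S ∈ A, ∃ T ∈ A, S ≠ T ∧ 2 ≤ #(S ∩ T) := by
  simp [overlappingFamilies, EdgeDisjoint, Set.Pairwise, Nat.lt_iff_add_one_le]

def overlappingMoment (n r t : ℕ) (q : ℝ) : ℝ :=
  ∑ A ∈ overlappingFamilies n r t, q ^ #(cliqueEdges A)

theorem overlappingMoment_nonneg {t : ℕ} (hq0 : 0 ≤ q) :
    0 ≤ overlappingMoment n r t q :=
  sum_nonneg fun _ _ => pow_nonneg hq0 _

theorem binomialMoment_le (hq0 : 0 ≤ q) (t : ℕ) :
    binomialMoment n r t q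
      ≤ (n.choose r).choose t * q ^ (t * r.choose 2) + overlappingMoment n r t q := by
  classical
  rw [binomialMoment, overlappingMoment, overlappingFamilies,
    ← sum_filter_add_sum_filter_not _ EdgeDisjoint]
  gcongr
  calc _ = ∑ A ∈ (powersetCard r (univ : Finset (Fin n))).powersetCard t with EdgeDisjoint A,
          q ^ (t * r.choose 2) :=
        sum_congr rfl fun A hA => by
          obtain ⟨hA, hP⟩ := mem_filter.1 hA
          obtain ⟨hAR, rfl⟩ := mem_powersetCard.1 hA
          rw [card_cliqueEdges_of_edgeDisjoint (fun S hS => mem_powersetCard_univ.1 (hAR hS)) hP]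
    _ ≤ _ := by
        rw [sum_const, nsmul_eq_mul]
        gcongr
        exact_mod_cast (card_filter_le _ _).trans_eq (by simp)

theorem overlappingMoment_eq_zero {t : ℕ} (ht : t ≤ 1) : overlappingMoment n r t q = 0 :=
  sum_eq_zero fun A hA => by
    obtain ⟨⟨-, rfl⟩, S, hS, T, hT, hST, -⟩ := mem_overlappingFamilies.1 hA
    exact absurd (card_le_one.1 ht S hS T hT) hST

theorem overlappingMoment_two_le (hq0 : 0 ≤ q) (hq1 : q ≤ 1) :
    overlappingMoment n r 2 q ≤ n.choose r * q ^ r.choose 2 * extensionSum n r r 2 (r - 1) q := by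
  set R := powersetCard r (univ : Finset (Fin n))
  set F : Finset (Fin n) → Finset (Finset (Fin n)) := fun S => {T ∈ R | T ≠ S ∧ 2 ≤ #(T ∩ S)}
  have hcover : overlappingFamilies n r 2 ⊆ (R.sigma F).image fun p => insert p.2 {p.1} := by
    intro A hA
    obtain ⟨⟨hAR, hA2⟩, S, hS, T, hT, hST, h2⟩ := mem_overlappingFamilies.1 hA
    have hpair : A = {T, S} :=
      (eq_of_subset_of_card_le (insert_subset hT (singleton_subset_iff.2 hS))
        (by rw [hA2, card_pair hST.symm])).symm
    refine mem_image.2 ⟨⟨S, T⟩, mem_sigma.2 ⟨hAR hS, mem_filter.2 ⟨hAR hT, hST.symm, ?_⟩⟩,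
      hpair.symm⟩
    rwa [inter_comm]
  calc overlappingMoment n r 2 q
      ≤ ∑ p ∈ R.sigma F, q ^ #(cliqueEdges (insert p.2 {p.1})) :=
        sum_le_sum_comp_of_subset_image (fun _ => pow_nonneg hq0 _) hcover
    _ = ∑ S ∈ R, ∑ T ∈ F S, q ^ #(cliqueEdges (insert T {S})) := sum_sigma _ _ _
    _ ≤ ∑ S ∈ R, q ^ r.choose 2 * extensionSum n r r 2 (r - 1) q := by
        refine sum_le_sum fun S hS => ?_
        have hSr := mem_powersetCard_univ.1 hS
        have hce : #(cliqueEdges {S}) = r.choose 2 := by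
          rw [cliqueEdges, singleton_biUnion, card_edgesWithin, hSr]
        rw [← hce]
        refine sum_pow_card_cliqueEdges_insert_le hq0 hq1 (by simp [hSr]) (filter_subset _ _)
          fun T hT => ?_
        obtain ⟨hTR, hTS, h2⟩ := mem_filter.1 hT
        rw [singleton_biUnion, id, mem_Icc]
        exact ⟨h2, Nat.le_pred_of_lt (card_inter_lt_of_ne (mem_powersetCard_univ.1 hTR) hSr hTS)⟩
    _ = _ := by
        rw [sum_const, nsmul_eq_mul, card_powersetCard, card_univ, Fintype.card_fin, mul_assoc]

theorem overlappingMoment_succ_le (hq0 : 0 ≤ q) (hq1 : q ≤ 1) {t : ℕ} (ht : 2 ≤ t) :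
    overlappingMoment n r (t + 1) q
      ≤ overlappingMoment n r t q * extensionSum n r (r * t) 0 r q := by
  set R := powersetCard r (univ : Finset (Fin n))
  set Bad := overlappingFamilies n r
  have hcover : Bad (t + 1) ⊆ (Bad t ×ˢ R).image fun p => insert p.2 p.1 := by
    intro A hA
    obtain ⟨⟨hAR, hAt⟩, S, hS, T, hT, hST, h2⟩ := mem_overlappingFamilies.1 hA
    obtain ⟨U, hU, hUST⟩ := exists_mem_notMem_of_card_lt_card
      ((card_le_two (a := S) (b := T)).trans_lt (by omega : 2 < #A))
    simp only [mem_insert, mem_singleton, not_or] at hUST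
    refine mem_image.2 ⟨⟨A.erase U, U⟩, mem_product.2 ⟨?_, hAR hU⟩, insert_erase hU⟩
    exact mem_overlappingFamilies.2 ⟨⟨(erase_subset U A).trans hAR, by simp [hU, hAt]⟩,
      S, mem_erase.2 ⟨Ne.symm hUST.1, hS⟩, T, mem_erase.2 ⟨Ne.symm hUST.2, hT⟩, hST, h2⟩
  calc overlappingMoment n r (t + 1) q
      ≤ ∑ p ∈ Bad t ×ˢ R, q ^ #(cliqueEdges (insert p.2 p.1)) :=
        sum_le_sum_comp_of_subset_image (fun _ => pow_nonneg hq0 _) hcover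
    _ = ∑ A ∈ Bad t, ∑ S ∈ R, q ^ #(cliqueEdges (insert S A)) := sum_product _ _ _
    _ ≤ ∑ A ∈ Bad t, q ^ #(cliqueEdges A) * extensionSum n r (r * t) 0 r q := by
        refine sum_le_sum fun A hA => ?_
        obtain ⟨⟨hAR, hAt⟩, -⟩ := mem_overlappingFamilies.1 hA
        have hV : #(A.biUnion id) ≤ r * t := (card_biUnion_le_card_mul A id r fun S hS =>
          (mem_powersetCard_univ.1 (hAR hS)).le).trans_eq (by rw [hAt, mul_comm])
        refine sum_pow_card_cliqueEdges_insert_le hq0 hq1 hV subset_rfl fun S hS => ?_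
        exact mem_Icc.2 ⟨Nat.zero_le _,
          (card_le_card inter_subset_left).trans (mem_powersetCard_univ.1 hS).le⟩
    _ = _ := (sum_mul _ _ _).symm

end Overlaps

section Asymptotics

open Asymptotics

theorem tendsto_choose_mul_pow {M : ℕ → ℕ} {w : ℕ → ℝ} {l : ℝ} (hM : Tendsto M atTop atTop)
    (h : Tendsto (fun n => (M n : ℝ) * w n) atTop (𝓝 l)) (t : ℕ) :
    Tendsto (fun n => ((M n).choose t : ℝ) * w n ^ t) atTop (𝓝 (l ^ t / t.factorial)) := by
  have : (fun n => ((M n).choose t : ℝ) * w n ^ t)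
      ~[atTop] fun n => ((M n : ℝ) * w n) ^ t / t.factorial :=
    calc _ ~[atTop] fun n => (M n : ℝ) ^ t / t.factorial * w n ^ t :=
          ((isEquivalent_choose t).comp_tendsto hM).mul IsEquivalent.refl
      _ ~[atTop] _ := EventuallyEq.isEquivalent (.of_eq (by ext; field))
  refine this.tendsto_nhds_iff.2 ?_
  simpa [div_eq_mul_inv] using (h.pow t).mul_const ((t.factorial : ℝ)⁻¹)

theorem tendsto_choose_atTop {r : ℕ} (hr : 1 ≤ r) :
    Tendsto (fun n : ℕ => n.choose r) atTop atTop := by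
  refine tendsto_natCast_atTop_iff.1 ((isEquivalent_choose r).symm.tendsto_atTop ?_)
  exact ((tendsto_pow_atTop (by omega)).comp tendsto_natCast_atTop_atTop).atTop_div_const
    (by positivity)

theorem two_mul_choose_two_sub_choose_two {r s : ℕ} (hs : s ≤ r) :
    2 * (r.choose 2 - s.choose 2) = (r - 1) * (r - s) + s * (r - s) := by
  rcases Nat.eq_zero_or_pos r with rfl | hr
  · simp
  have := Nat.choose_le_choose 2 hs
  qify [this, hs, hr]
  rw [Nat.cast_choose_two, Nat.cast_choose_two]
  ring

theorem choose_mul_sq_pow_le {z : ℝ} (hz : 0 ≤ z) (n : ℕ) {r s : ℕ} (hs : s ≤ r) :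
    (n.choose (r - s) : ℝ) * (z ^ 2) ^ (r.choose 2 - s.choose 2)
      ≤ ((n : ℝ) * z ^ (r - 1)) ^ (r - s) * z ^ (s * (r - s)) := by
  rw [← pow_mul, two_mul_choose_two_sub_choose_two hs, pow_add, pow_mul, ← mul_assoc, mul_pow]
  gcongr
  exact_mod_cast Nat.choose_le_pow n (r - s)

theorem sub_one_le_mul_sub {r s : ℕ} (h1 : 1 ≤ s) (h2 : s < r) : r - 1 ≤ s * (r - s) := by
  obtain ⟨d, rfl⟩ := Nat.exists_eq_add_of_lt h2
  rw [show s + d + 1 - 1 = s + d by omega, show s + d + 1 - s = d + 1 by omega]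
  nlinarith

variable {r : ℕ}

theorem extensionSum_le {z : ℝ} (hz0 : 0 ≤ z) (hz1 : z ≤ 1) (n L a : ℕ) {b : ℕ} (hb : b ≤ r) :
    extensionSum n r L a b (z ^ 2)
      ≤ ∑ s ∈ Icc a b, (L.choose s : ℝ) * ((n : ℝ) * z ^ (r - 1)) ^ (r - s) :=
  sum_le_sum fun s hs => by
    rw [mul_assoc]
    gcongr
    exact (choose_mul_sq_pow_le hz0 n ((mem_Icc.1 hs).2.trans hb)).trans
      (mul_le_of_le_one_right (by positivity) (pow_le_one₀ hz0 hz1))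

theorem extensionSum_le_mul {z : ℝ} (hz0 : 0 ≤ z) (hz1 : z ≤ 1) (n L : ℕ) {a b : ℕ} (ha : 1 ≤ a)
    (hb : b < r) :
    extensionSum n r L a b (z ^ 2)
      ≤ (∑ s ∈ Icc a b, (L.choose s : ℝ) * ((n : ℝ) * z ^ (r - 1)) ^ (r - s)) * z ^ (r - 1) := by
  rw [sum_mul]
  refine sum_le_sum fun s hs => ?_
  obtain ⟨has, hsb⟩ := mem_Icc.1 hs
  rw [mul_assoc, mul_assoc]
  refine mul_le_mul_of_nonneg_left ((choose_mul_sq_pow_le hz0 n (by omega)).trans ?_)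
    (by positivity)
  exact mul_le_mul_of_nonneg_left
    (pow_le_pow_of_le_one hz0 hz1 (sub_one_le_mul_sub (by omega) (by omega))) (by positivity)

variable {c : ℝ} {z : ℕ → ℝ}

theorem tendsto_choose_mul_pow_choose_two
    (hlim : Tendsto (fun n : ℕ => (n : ℝ) * z n ^ (r - 1)) atTop (𝓝 c)) :
    Tendsto (fun n => (n.choose r : ℝ) * (z n ^ 2) ^ r.choose 2) atTop
      (𝓝 (c ^ r / r.factorial)) := by
  have hexp : 2 * r.choose 2 = (r - 1) * r := by
    simpa using two_mul_choose_two_sub_choose_two (Nat.zero_le r)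
  simpa only [← pow_mul, hexp] using ProbabilityTheory.tendsto_choose_mul_pow_atTop r hlim

theorem tendsto_overlappingMoment_two (hr : 1 ≤ r) (hz0 : ∀ n, 0 ≤ z n) (hz1 : ∀ n, z n ≤ 1)
    (hlim : Tendsto (fun n : ℕ => (n : ℝ) * z n ^ (r - 1)) atTop (𝓝 c)) :
    Tendsto (fun n => overlappingMoment n r 2 (z n ^ 2)) atTop (𝓝 0) := by
  have hsum : Tendsto (fun n : ℕ => ∑ s ∈ Icc 2 (r - 1),
      (r.choose s : ℝ) * ((n : ℝ) * z n ^ (r - 1)) ^ (r - s)) atTop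
      (𝓝 (∑ s ∈ Icc 2 (r - 1), (r.choose s : ℝ) * c ^ (r - s))) :=
    tendsto_finsetSum _ fun s _ => (hlim.pow _).const_mul _
  have hbound := (tendsto_choose_mul_pow_choose_two hlim).mul
    (hsum.mul (ProbabilityTheory.tendsto_zero_of_tendsto_mul_atTop hlim))
  rw [mul_zero, mul_zero] at hbound
  refine squeeze_zero (fun n => overlappingMoment_nonneg (by positivity)) (fun n => ?_) hbound
  refine (overlappingMoment_two_le (by positivity) (pow_le_one₀ (hz0 n) (hz1 n))).trans ?_
  exact mul_le_mul_of_nonneg_left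
    (extensionSum_le_mul (hz0 n) (hz1 n) n r (by norm_num) (by omega)) (by positivity)

theorem tendsto_overlappingMoment (hr : 1 ≤ r) (hz0 : ∀ n, 0 ≤ z n) (hz1 : ∀ n, z n ≤ 1)
    (hlim : Tendsto (fun n : ℕ => (n : ℝ) * z n ^ (r - 1)) atTop (𝓝 c)) (t : ℕ) :
    Tendsto (fun n => overlappingMoment n r t (z n ^ 2)) atTop (𝓝 0) := by
  rcases le_or_gt t 1 with ht | ht
  · simp only [overlappingMoment_eq_zero ht, tendsto_const_nhds]
  induction t, ht using Nat.le_induction with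
  | base => exact tendsto_overlappingMoment_two hr hz0 hz1 hlim
  | succ t ht ih =>
    have hsum : Tendsto (fun n : ℕ => ∑ s ∈ Icc 0 r,
        ((r * t).choose s : ℝ) * ((n : ℝ) * z n ^ (r - 1)) ^ (r - s)) atTop
        (𝓝 (∑ s ∈ Icc 0 r, ((r * t).choose s : ℝ) * c ^ (r - s))) :=
      tendsto_finsetSum _ fun s _ => (hlim.pow _).const_mul _
    have hbound := ih.mul hsum
    rw [zero_mul] at hbound
    refine squeeze_zero (fun n => overlappingMoment_nonneg (by positivity)) (fun n => ?_) hbound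
    refine (overlappingMoment_succ_le (by positivity) (pow_le_one₀ (hz0 n) (hz1 n)) ht).trans ?_
    exact mul_le_mul_of_nonneg_left (extensionSum_le (hz0 n) (hz1 n) n _ 0 le_rfl)
      (overlappingMoment_nonneg (by positivity))

theorem tendsto_binomialMoment (hr : 1 ≤ r) (hz0 : ∀ n, 0 ≤ z n) (hz1 : ∀ n, z n ≤ 1)
    (hlim : Tendsto (fun n : ℕ => (n : ℝ) * z n ^ (r - 1)) atTop (𝓝 c)) (t : ℕ) :
    Tendsto (fun n => binomialMoment n r t (z n ^ 2)) atTop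
      (𝓝 ((c ^ r / r.factorial) ^ t / t.factorial)) := by
  have hmain : Tendsto (fun n => ((n.choose r).choose t : ℝ) * (z n ^ 2) ^ (t * r.choose 2))
      atTop (𝓝 ((c ^ r / r.factorial) ^ t / t.factorial)) := by
    simpa only [pow_mul'] using
      tendsto_choose_mul_pow (tendsto_choose_atTop hr) (tendsto_choose_mul_pow_choose_two hlim) t
  have hupper := hmain.add (tendsto_overlappingMoment hr hz0 hz1 hlim t)
  rw [add_zero] at hupper
  exact tendsto_of_tendsto_of_tendsto_of_le_of_le hmain hupper
    (fun n => choose_choose_mul_pow_le_binomialMoment (sq_nonneg _)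
      (pow_le_one₀ (hz0 n) (hz1 n)) t)
    (fun n => binomialMoment_le (sq_nonneg _) t)

end Asymptotics

section Poisson

theorem tendsto_of_forall_abs_sub_le {ι : Type*} {l : Filter ι} {a : ι → ℝ} {s e : ℕ → ι → ℝ}
    {S E : ℕ → ℝ} {P : ℝ} (h : ∀ J i, |a i - s J i| ≤ e J i)
    (hs : ∀ J, Tendsto (s J) l (𝓝 (S J))) (he : ∀ J, Tendsto (e J) l (𝓝 (E J)))
    (hS : Tendsto S atTop (𝓝 P)) (hE : Tendsto E atTop (𝓝 0)) : Tendsto a l (𝓝 P) := by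
  refine Metric.tendsto_nhds.2 fun ε hε => ?_
  obtain ⟨J, hSJ, hEJ⟩ := ((Metric.tendsto_nhds.1 hS (ε / 4) (by positivity)).and
    (Metric.tendsto_nhds.1 hE (ε / 4) (by positivity))).exists
  filter_upwards [Metric.tendsto_nhds.1 (hs J) (ε / 4) (by positivity),
    Metric.tendsto_nhds.1 (he J) (ε / 4) (by positivity)] with i hsi hei
  rw [Real.dist_eq] at *
  rw [sub_zero] at hEJ
  have := abs_sub_le (a i) (s J i) P
  have := abs_sub_le (s J i) (S J) P
  have := h J i
  linarith [(abs_sub_lt_iff.1 hei).1, le_abs_self (E J)]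

theorem choose_mul_pow_div_factorial (k j : ℕ) (μ : ℝ) :
    ((k + j).choose k : ℝ) * (μ ^ (k + j) / (k + j).factorial)
      = μ ^ k / k.factorial * (μ ^ j / j.factorial) := by
  have h : ((k + j).choose k : ℝ) * k.factorial * j.factorial = (k + j).factorial := by
    exact_mod_cast (by simpa using Nat.choose_mul_factorial_mul_factorial (Nat.le_add_right k j))
  have hpos : ((k + j).choose k : ℝ) ≠ 0 :=
    Nat.cast_ne_zero.2 (Nat.choose_pos (Nat.le_add_right k j)).ne'
  rw [← h, pow_add]
  field_simp

theorem tendsto_of_abs_sub_alternating_sum_le {ι : Type*} {l : Filter ι} {a : ι → ℝ}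
    {B : ℕ → ι → ℝ} {μ : ℝ} (k : ℕ) (hB : ∀ t, Tendsto (B t) l (𝓝 (μ ^ t / t.factorial)))
    (h : ∀ J i, |a i - ∑ j ∈ range (J + 1), (-1) ^ j * (k + j).choose k * B (k + j) i|
      ≤ (k + J + 1).choose k * B (k + J + 1) i) :
    Tendsto a l (𝓝 (Real.exp (-μ) * μ ^ k / k.factorial)) := by
  refine tendsto_of_forall_abs_sub_le h
    (fun J => tendsto_finsetSum _ fun j _ => (hB (k + j)).const_mul _)
    (fun J => (hB (k + J + 1)).const_mul _) ?_ ?_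
  · have hexp : Tendsto (fun J => ∑ j ∈ range (J + 1), (-μ) ^ j / j.factorial) atTop
        (𝓝 (Real.exp (-μ))) := by
      rw [Real.exp_eq_exp_ℝ]
      exact (NormedSpace.expSeries_div_hasSum_exp (-μ)).tendsto_sum_nat.comp
        (tendsto_add_atTop_nat 1)
    rw [mul_div_assoc, mul_comm (Real.exp (-μ))]
    refine (hexp.const_mul (μ ^ k / k.factorial)).congr fun J => ?_
    rw [mul_sum]
    refine sum_congr rfl fun j _ => ?_
    rw [mul_assoc, choose_mul_pow_div_factorial, neg_pow]
    ring
  · have := ((FloorSemiring.tendsto_pow_div_factorial_atTop μ).comp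
      (tendsto_add_atTop_nat 1)).const_mul (μ ^ k / k.factorial)
    rw [mul_zero] at this
    refine this.congr fun J => ?_
    simp only [Function.comp, ← choose_mul_pow_div_factorial, add_assoc]

end Poisson

end ErdosRenyi

theorem stmt2_general (r : ℕ) (hr : 2 ≤ r) (c : ℝ) (p : ℕ → ℝ)
    (hp : ∀ n, 0 < p n ∧ p n < 1)
    (hlim : Tendsto (fun n : ℕ => (n : ℝ) * p n ^ (((r : ℝ) - 1) / 2)) atTop (nhds c))
    (k : ℕ) :
    Tendsto (fun n : ℕ => Pr n (p n) (fun Γ => Nr n r Γ = k)) atTop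
      (nhds (Real.exp (-(c ^ r / r.factorial)) * (c ^ r / r.factorial) ^ k / k.factorial)) := by
  have hzlim : Tendsto (fun n : ℕ => (n : ℝ) * Real.sqrt (p n) ^ (r - 1)) atTop (nhds c) := by
    refine hlim.congr fun n => ?_
    rw [Real.sqrt_eq_rpow, ← Real.rpow_natCast, ← Real.rpow_mul (hp n).1.le,
      Nat.cast_sub (by omega : 1 ≤ r)]
    ring_nf
  have hB (t : ℕ) := ErdosRenyi.tendsto_binomialMoment (by omega) (fun n => Real.sqrt_nonneg _)
    (fun n => Real.sqrt_le_one.2 (hp n).2.le) hzlim t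
  simp only [fun n => Real.sq_sqrt (hp n).1.le] at hB
  exact ErdosRenyi.tendsto_of_abs_sub_alternating_sum_le k hB fun J n =>
    ErdosRenyi.abs_Pr_Nr_eq_sub_sum_le r k J (hp n).1.le (hp n).2.le

/-- If `n · p_n^{(r−1)/2} → c > 0` then the number of `r`-element complete subgraphs of the
random graph `G(n, p_n)` converges in distribution to a Poisson law with mean `λ = c^r/r!`. -/
theorem stmt2 (r : ℕ) (hr : 2 ≤ r) (c : ℝ) (hc : 0 < c) (p : ℕ → ℝ)
    (hp : ∀ n, 0 < p n ∧ p n < 1)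
    (hlim : Tendsto (fun n : ℕ => (n : ℝ) * p n ^ (((r : ℝ) - 1) / 2)) atTop (nhds c))
    (k : ℕ) :
    Tendsto (fun n : ℕ => Pr n (p n) (fun Γ => Nr n r Γ = k)) atTop
      (nhds (Real.exp (-(c ^ r / r.factorial)) * (c ^ r / r.factorial) ^ k / k.factorial)) :=
  stmt2_general r hr c p hp hlim k
end
end

section
/- Fix a real number p with 0 < p < 1 and a real number ε > 0, and for each n set r = r(n) = ⌊z(n,p) − ε⌋. Then r^{−1}·C(n,r)·p^{C(r,2)} → ∞ as n → ∞, where C(m,k) denotes the binomial coefficient. -/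
/-!
Stirling's bound `log r! ≤ r log r - r + (log r) / 2 + 1` and `C(n, r) ≥ (n + 1 - r)^r / r!` give
`r⁻¹ C(n, r) p^C(r, 2) ≥ exp (r ρ - (3/2) log r - 1)` with
`ρ = log (n + 1 - r) - log r + 1 - ((r - 1) / 2) log q`.
The constant `2 log_q (e/2) + 1` in `z` is exactly what makes `r ≤ z - ε` (together with
`r ≤ 2 log_q n`) force `ρ ≥ log ((n + 1 - r) / n) + (ε / 2) log q`, and the logarithm tends to `0`
because `r = O(log n)`. Hence eventually `ρ ≥ (ε / 4) log q`, and `r → ∞` finishes the proof.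
-/

open Filter

noncomputable section

/-- `z(n,p) = 2 log_q n − 2 log_q log_q n + 2 log_q (e/2) + 1`, where `q = 1/p`. -/
def zf (p : ℝ) (n : ℕ) : ℝ :=
  2 * Real.logb p⁻¹ n - 2 * Real.logb p⁻¹ (Real.logb p⁻¹ n)
    + 2 * Real.logb p⁻¹ (Real.exp 1 / 2) + 1

open Real Asymptotics Topology
open scoped Nat

theorem Real.log_factorial_le {n : ℕ} (hn : n ≠ 0) :
    log n ! ≤ n * log n - n + log n / 2 + 1 := by
  obtain ⟨m, rfl⟩ := Nat.exists_eq_succ_of_ne_zero hn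
  have h := Stirling.log_stirlingSeq'_antitone (Nat.zero_le m)
  simp only [Function.comp_apply, Stirling.stirlingSeq_one, Stirling.log_stirlingSeq_formula] at h
  rw [log_div (exp_ne_zero 1) (by positivity), log_exp, log_sqrt zero_le_two,
    log_div (by positivity) (exp_ne_zero 1), log_exp,
    log_mul two_ne_zero (by positivity)] at h
  linarith

/-- Up to lower-order terms, `r⁻¹ * C(n, r) * p ^ C(r, 2)` is `exp (r * chooseRate p n r)`. -/
def chooseRate (p : ℝ) (n r : ℕ) : ℝ :=
  log (n + 1 - r) - log r + 1 + (r - 1) / 2 * log p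

theorem exp_le_inv_mul_choose_mul_pow {p : ℝ} (hp : 0 < p) {n r : ℕ} (hr : r ≠ 0) (hrn : r ≤ n) :
    exp (r * chooseRate p n r - 3 / 2 * log r - 1) ≤
      (r : ℝ)⁻¹ * n.choose r * p ^ r.choose 2 := by
  have hpos : (0 : ℝ) < n + 1 - r := by
    have : (r : ℝ) ≤ n := by exact_mod_cast hrn
    linarith
  have hchoose : r * log (n + 1 - r) - log r ! ≤ log (n.choose r) := by
    have h := Nat.pow_le_choose (α := ℝ) r n
    rw [Nat.cast_sub (by omega), Nat.cast_add_one] at h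
    have := log_le_log (by positivity) h
    rwa [log_div (by positivity) (by positivity), log_pow] at this
  have hC : (0 : ℝ) < n.choose r := by exact_mod_cast Nat.choose_pos hrn
  rw [← exp_log (by positivity : (0 : ℝ) < (r : ℝ)⁻¹ * n.choose r * p ^ r.choose 2), exp_le_exp,
    log_mul (by positivity) (by positivity), log_mul (by positivity) hC.ne', log_inv, log_pow,
    Nat.cast_choose_two, chooseRate]
  linear_combination hchoose + Real.log_factorial_le hr

theorem tendsto_mul_add_mul_log_add_atTop {a : ℝ} (ha : 0 < a) (b c : ℝ) :
    Tendsto (fun x => a * x + b * log x + c) atTop atTop := by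
  have ho : (fun x => b * log x + c) =o[atTop] fun x => a * x :=
    (((isLittleO_log_id_atTop.const_mul_left b).add (isLittleO_const_id_atTop c)).const_mul_right
      ha.ne')
  exact ((IsEquivalent.refl.add_isLittleO ho).symm.tendsto_atTop
    (tendsto_id.const_mul_atTop ha)).congr fun x => (add_assoc _ _ _).symm

section
variable {p : ℝ}

theorem zf_mul_log_inv (hp0 : 0 < p) (hp1 : p ≠ 1) (n : ℕ) :
    zf p n * log p⁻¹ = 2 * log n - 2 * log (logb p⁻¹ n) + 2 * (1 - log 2) + log p⁻¹ := by
  have hL : log p⁻¹ ≠ 0 := by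
    rw [log_inv, neg_ne_zero]; exact log_ne_zero_of_pos_of_ne_one hp0 hp1
  have hlogb (x : ℝ) : logb p⁻¹ x * log p⁻¹ = log x := div_mul_cancel₀ _ hL
  have hlog : log (exp 1 / 2) = 1 - log 2 := by rw [log_div (exp_ne_zero 1) two_ne_zero, log_exp]
  rw [zf]
  linear_combination 2 * hlogb n - 2 * hlogb (logb p⁻¹ n) + 2 * hlogb (exp 1 / 2) + 2 * hlog

theorem tendsto_zf_sub_atTop (hp0 : 0 < p) (hp1 : p < 1) (ε : ℝ) :
    Tendsto (fun n => zf p n - ε) atTop atTop := by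
  have hA := (tendsto_logb_atTop ((one_lt_inv₀ hp0).mpr hp1)).comp tendsto_natCast_atTop_atTop
  refine ((tendsto_mul_add_mul_log_add_atTop two_pos (-2 / log p⁻¹)
    (2 * logb p⁻¹ (exp 1 / 2) + 1 - ε)).comp hA).congr fun n => ?_
  simp only [Function.comp_apply, zf, logb]
  ring

theorem eventually_zf_sub_le (hp0 : 0 < p) (hp1 : p < 1) (ε : ℝ) :
    ∀ᶠ n : ℕ in atTop, zf p n - ε ≤ 2 * logb p⁻¹ n := by
  have hq : 1 < p⁻¹ := (one_lt_inv₀ hp0).mpr hp1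
  have hA := (tendsto_logb_atTop hq).comp tendsto_natCast_atTop_atTop
  filter_upwards [((tendsto_logb_atTop hq).comp hA).eventually_ge_atTop
    ((2 * logb p⁻¹ (exp 1 / 2) + 1 - ε) / 2)] with n hn
  simp only [Function.comp_apply] at hn
  simp only [zf]
  linarith

theorem log_add_mul_log_inv_le (hp0 : 0 < p) (hp1 : p < 1) {ε : ℝ} {n r : ℕ} (hn : 1 < n)
    (hr : r ≠ 0) (hrz : (r : ℝ) ≤ zf p n - ε) (hrA : (r : ℝ) ≤ 2 * logb p⁻¹ n) :
    log r + (r - 1) / 2 * log p⁻¹ ≤ log n + 1 - ε / 2 * log p⁻¹ := by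
  have hq : 1 < p⁻¹ := (one_lt_inv₀ hp0).mpr hp1
  have hA : 0 < logb p⁻¹ n := logb_pos hq (by exact_mod_cast hn)
  have hlog_r : log r ≤ log 2 + log (logb p⁻¹ n) := by
    rw [← log_mul two_ne_zero hA.ne']
    exact log_le_log (by positivity) hrA
  have hzf : (r - 1) / 2 * log p⁻¹ ≤ (zf p n - ε - 1) / 2 * log p⁻¹ := by
    gcongr
    exact (log_pos hq).le
  linarith [zf_mul_log_inv hp0 hp1.ne n]

theorem tendsto_natFloor_zf_sub_div (hp0 : 0 < p) (hp1 : p < 1) (ε : ℝ) :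
    Tendsto (fun n : ℕ => (⌊zf p n - ε⌋₊ : ℝ) / n) atTop (𝓝 0) := by
  have hlog : Tendsto (fun n : ℕ => 2 / log p⁻¹ * (log n / n)) atTop (𝓝 0) := by
    simpa using ((isLittleO_log_id_atTop.tendsto_div_nhds_zero).comp
      tendsto_natCast_atTop_atTop).const_mul (2 / log p⁻¹)
  refine tendsto_of_tendsto_of_tendsto_of_le_of_le' tendsto_const_nhds hlog
    (Eventually.of_forall fun n => by positivity) ?_
  filter_upwards [(tendsto_zf_sub_atTop hp0 hp1 ε).eventually_ge_atTop 0,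
    eventually_zf_sub_le hp0 hp1 ε] with n hn hle
  calc (⌊zf p n - ε⌋₊ : ℝ) / n ≤ 2 * logb p⁻¹ n / n := by
        gcongr
        exact (Nat.floor_le hn).trans hle
    _ = 2 / log p⁻¹ * (log n / n) := by rw [logb]; ring

theorem tendsto_log_add_one_sub_sub_log {u : ℕ → ℝ} (hu : Tendsto (fun n => u n / n) atTop (𝓝 0)) :
    Tendsto (fun n : ℕ => log (n + 1 - u n) - log n) atTop (𝓝 0) := by
  have h1 : Tendsto (fun n : ℕ => 1 + (n : ℝ)⁻¹ - u n / n) atTop (𝓝 1) := by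
    simpa using (tendsto_const_nhds.add tendsto_inv_atTop_nhds_zero_nat).sub hu
  have h2 := (continuousAt_log one_ne_zero).tendsto.comp h1
  rw [log_one] at h2
  refine h2.congr' ?_
  filter_upwards [eventually_gt_atTop 0, h1.eventually (lt_mem_nhds zero_lt_one)] with n hn hpos
  have hn' : (n : ℝ) ≠ 0 := by positivity
  have : 1 + (n : ℝ)⁻¹ - u n / n = (n + 1 - u n) / n := by field_simp
  rw [Function.comp_apply, this, log_div _ hn']
  rw [this] at hpos
  exact (div_pos_iff_of_pos_right (by positivity)).mp hpos |>.ne'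

theorem eventually_le_chooseRate (hp0 : 0 < p) (hp1 : p < 1) {ε : ℝ} (hε : 0 < ε) :
    ∀ᶠ n : ℕ in atTop, ε / 4 * log p⁻¹ ≤ chooseRate p n ⌊zf p n - ε⌋₊ := by
  have hL : 0 < log p⁻¹ := log_pos ((one_lt_inv₀ hp0).mpr hp1)
  filter_upwards [eventually_gt_atTop 1,
    (tendsto_zf_sub_atTop hp0 hp1 ε).eventually_ge_atTop 1, eventually_zf_sub_le hp0 hp1 ε,
    (tendsto_log_add_one_sub_sub_log (tendsto_natFloor_zf_sub_div hp0 hp1 ε)).eventually_const_le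
      (neg_lt_zero.mpr (by positivity) : -(ε / 4 * log p⁻¹) < 0)] with n hn hz1 hzA hlog
  have hrz := Nat.floor_le (by linarith : 0 ≤ zf p n - ε)
  have := log_add_mul_log_inv_le hp0 hp1 hn (Nat.floor_pos.mpr hz1).ne' hrz (hrz.trans hzA)
  rw [chooseRate]
  simp only [log_inv] at this hlog ⊢
  linarith

end

/-- For `r = r(n) = ⌊z(n,p) − ε⌋`, one has `r⁻¹·C(n,r)·p^{C(r,2)} → ∞` as `n → ∞`. -/
theorem stmt4 (p ε : ℝ) (hp0 : 0 < p) (hp1 : p < 1) (hε : 0 < ε) :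
    Tendsto (fun n : ℕ =>
        ((⌊zf p n - ε⌋.toNat : ℝ))⁻¹ * (n.choose ⌊zf p n - ε⌋.toNat : ℝ) *
          p ^ (⌊zf p n - ε⌋.toNat.choose 2))
      atTop atTop := by
  simp only [Int.floor_toNat]
  have hL : 0 < log p⁻¹ := log_pos ((one_lt_inv₀ hp0).mpr hp1)
  have hr : Tendsto (fun n : ℕ => (⌊zf p n - ε⌋₊ : ℝ)) atTop atTop :=
    tendsto_natCast_atTop_atTop.comp
      (tendsto_nat_floor_atTop.comp (tendsto_zf_sub_atTop hp0 hp1 ε))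
  refine tendsto_atTop_mono' _ ?_ (tendsto_exp_atTop.comp
    ((tendsto_mul_add_mul_log_add_atTop (by positivity : 0 < ε / 4 * log p⁻¹) (-3 / 2) (-1)).comp
      hr))
  filter_upwards [eventually_le_chooseRate hp0 hp1 hε, hr.eventually_ge_atTop 1,
    (tendsto_natFloor_zf_sub_div hp0 hp1 ε).eventually_le_const one_pos,
    eventually_gt_atTop 0] with n hrate hr1 hrn_div hn
  have hr0 : ⌊zf p n - ε⌋₊ ≠ 0 := Nat.pos_iff_ne_zero.mp (Nat.one_le_cast.mp hr1)
  have hrn : ⌊zf p n - ε⌋₊ ≤ n := by exact_mod_cast (div_le_one (by positivity)).mp hrn_div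
  refine le_trans ?_ (exp_le_inv_mul_choose_mul_pow hp0 hr0 hrn)
  simp only [Function.comp_apply]
  gcongr
  linarith [mul_le_mul_of_nonneg_left hrate (Nat.cast_nonneg ⌊zf p n - ε⌋₊ : (0 : ℝ) ≤ _)]

end
end

section
/- Fix an integer r ≥ 1 and a real number p with 0 < p < 1. Let S, T be disjoint r-element subsets of {1,…,n}, and let S', T' be disjoint r-element subsets of {1,…,n}, with a = |S∩S'|, b = |T∩S'|, c = |S∩T'|, d = |T∩T'|. Then the probability, under the Erdős–Rényi random graph G(n,p), that each of the four sets S, T, S', T' induces a complete subgraph equals p^{4·C(r,2) − C(a,2) − C(b,2) − C(c,2) − C(d,2)}. -/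
/-! The four cliques are present exactly when `Γ` contains the fixed edge set
`E₀ = K_S ∪ K_T ∪ K_{S'} ∪ K_{T'}`, an event of probability `p ^ |E₀|` because the edges
outside `E₀` are unconstrained. Inclusion–exclusion gives `|E₀|`: `K_S ∪ K_T` and
`K_{S'} ∪ K_{T'}` have `2·C(r,2)` edges each, and their intersection is the disjoint union of
the cliques on `S ∩ S'`, `S ∩ T'`, `T ∩ S'`, `T ∩ T'`. -/

open Finset Filter

noncomputable section

def cliqueEdges (n : ℕ) (S : Finset (Fin n)) : Finset (EdgeType n) :=
  {e | ∀ v ∈ e.1, v ∈ S}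

section CliqueEdges

variable {n : ℕ}

lemma mem_cliqueEdges {S : Finset (Fin n)} {e : EdgeType n} :
    e ∈ cliqueEdges n S ↔ ∀ v ∈ e.1, v ∈ S := by
  simp [cliqueEdges]

lemma isCliqueIn_iff_cliqueEdges_subset {Γ : RGraph n} {S : Finset (Fin n)} :
    IsCliqueIn n Γ S ↔ cliqueEdges n S ⊆ Γ := by
  refine ⟨fun h ⟨e, he⟩ heS => ?_, fun h v hv w hw hvw => h (mem_cliqueEdges.2 ?_)⟩
  · induction e using Sym2.inductionOn with
    | hf v w =>
      replace heS := mem_cliqueEdges.1 heS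
      exact h v (heS v (Sym2.mem_mk_left v w)) w (heS w (Sym2.mem_mk_right v w))
        (by simpa [Sym2.mk_isDiag_iff] using he)
  · rintro u hu
    rcases Sym2.mem_iff.1 hu with rfl | rfl <;> assumption

lemma cliqueEdges_inter (A B : Finset (Fin n)) :
    cliqueEdges n (A ∩ B) = cliqueEdges n A ∩ cliqueEdges n B := by
  ext e
  simp only [mem_inter, mem_cliqueEdges, ← forall_and]

lemma disjoint_cliqueEdges {A B : Finset (Fin n)} (h : Disjoint A B) :
    Disjoint (cliqueEdges n A) (cliqueEdges n B) :=
  disjoint_left.2 fun e hA hB =>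
    disjoint_left.1 h (mem_cliqueEdges.1 hA _ e.1.out_fst_mem)
      (mem_cliqueEdges.1 hB _ e.1.out_fst_mem)

lemma card_cliqueEdges (A : Finset (Fin n)) : #(cliqueEdges n A) = (#A).choose 2 := by
  rw [← Sym2.card_image_offDiag A,
    ← card_map ⟨fun e : EdgeType n => e.1, Subtype.val_injective⟩]
  congr 1
  ext e
  induction e using Sym2.inductionOn with
  | hf v w =>
    simp only [Finset.mem_map, mem_image, mem_offDiag, Prod.exists,
      Function.uncurry_apply_pair]
    constructor
    · rintro ⟨⟨_, hvw⟩, hA, rfl⟩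
      replace hA := mem_cliqueEdges.1 hA
      exact ⟨v, w, ⟨hA v (Sym2.mem_mk_left v w), hA w (Sym2.mem_mk_right v w),
        by simpa using hvw⟩, rfl⟩
    · rintro ⟨a, b, ⟨ha, hb, hab⟩, h⟩
      refine ⟨⟨s(a, b), by simpa using hab⟩, mem_cliqueEdges.2 fun u hu => ?_, h⟩
      rcases Sym2.mem_iff.1 hu with rfl | rfl <;> assumption

lemma card_cliqueEdges_union {A B : Finset (Fin n)} (h : Disjoint A B) :
    #(cliqueEdges n A ∪ cliqueEdges n B) = (#A).choose 2 + (#B).choose 2 := by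
  rw [card_union_of_disjoint (disjoint_cliqueEdges h), card_cliqueEdges, card_cliqueEdges]

end CliqueEdges

theorem Finset.sum_filter_superset_pow_mul_pow {α R : Type*} [Fintype α] [DecidableEq α]
    [CommRing R] (E₀ : Finset α) (p : R) :
    ∑ Γ with E₀ ⊆ Γ, p ^ #Γ * (1 - p) ^ (Fintype.card α - #Γ) = p ^ #E₀ := by
  have hsplit : ∀ Δ ∈ E₀ᶜ.powerset, p ^ #(Δ ∪ E₀) * (1 - p) ^ (Fintype.card α - #(Δ ∪ E₀))
      = p ^ #E₀ * (p ^ #Δ * (1 - p) ^ (#E₀ᶜ - #Δ)) := by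
    intro Δ hΔ
    have hdisj : Disjoint Δ E₀ := disjoint_compl_left.mono_left (mem_powerset.1 hΔ)
    rw [card_union_of_disjoint hdisj, card_compl, pow_add, Nat.sub_sub, add_comm #Δ]
    ring
  calc ∑ Γ with E₀ ⊆ Γ, p ^ #Γ * (1 - p) ^ (Fintype.card α - #Γ)
      = ∑ Δ ∈ E₀ᶜ.powerset, p ^ #(Δ ∪ E₀) * (1 - p) ^ (Fintype.card α - #(Δ ∪ E₀)) := by
        refine sum_nbij' (· \ E₀) (· ∪ E₀) (fun Γ _ => ?_) (fun Δ _ => ?_)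
          (fun Γ hΓ => sdiff_union_of_subset (mem_filter.1 hΓ).2)
          (fun Δ hΔ => union_sdiff_cancel_right (disjoint_compl_left.mono_left (mem_powerset.1 hΔ)))
          (fun Γ hΓ => by rw [sdiff_union_of_subset (mem_filter.1 hΓ).2])
        · exact mem_powerset.2 fun x hx => mem_compl.2 (mem_sdiff.1 hx).2
        · exact mem_filter.2 ⟨mem_univ _, subset_union_right⟩
    _ = p ^ #E₀ * (p + (1 - p)) ^ #E₀ᶜ := by
        rw [sum_congr rfl hsplit, ← mul_sum, sum_pow_mul_eq_add_pow]
    _ = p ^ #E₀ := by simp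

lemma card_edgeType (n : ℕ) : Fintype.card (EdgeType n) = n.choose 2 := by
  have := Sym2.card_subtype_not_diag (α := Fin n)
  rwa [Fintype.card_fin] at this

lemma pr_superset (n : ℕ) (p : ℝ) (E₀ : Finset (EdgeType n)) :
    Pr n p (E₀ ⊆ ·) = p ^ #E₀ := by
  classical
  rw [Pr, filter_congr_decidable, ← sum_filter_superset_pow_mul_pow E₀ p, card_edgeType]
  rfl

-- Stated additively, since the subtraction would be truncated in `ℕ`.
lemma card_cliqueEdges_union_union {n : ℕ} {S T S' T' : Finset (Fin n)}
    (hST : Disjoint S T) (hST' : Disjoint S' T') :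
    #((cliqueEdges n S ∪ cliqueEdges n T) ∪ (cliqueEdges n S' ∪ cliqueEdges n T'))
      + ((#(S ∩ S')).choose 2 + (#(S ∩ T')).choose 2
        + ((#(T ∩ S')).choose 2 + (#(T ∩ T')).choose 2))
      = (#S).choose 2 + (#T).choose 2 + ((#S').choose 2 + (#T').choose 2) := by
  set Y := cliqueEdges n S' ∪ cliqueEdges n T'
  have hmeet : ∀ A, cliqueEdges n A ∩ Y = cliqueEdges n (A ∩ S') ∪ cliqueEdges n (A ∩ T') := by
    intro A
    rw [inter_union_distrib_left, cliqueEdges_inter, cliqueEdges_inter]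
  have hinter : #((cliqueEdges n S ∪ cliqueEdges n T) ∩ Y)
      = (#(S ∩ S')).choose 2 + (#(S ∩ T')).choose 2
        + ((#(T ∩ S')).choose 2 + (#(T ∩ T')).choose 2) := by
    rw [union_inter_distrib_right, card_union_of_disjoint
      ((disjoint_cliqueEdges hST).mono inter_subset_left inter_subset_left), hmeet, hmeet,
      card_cliqueEdges_union (hST'.mono inter_subset_right inter_subset_right),
      card_cliqueEdges_union (hST'.mono inter_subset_right inter_subset_right)]
  rw [← hinter, card_union_add_card_inter, card_cliqueEdges_union hST,
    card_cliqueEdges_union hST']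

theorem stmt6_general (r : ℕ) (p : ℝ) (n : ℕ)
    (S T S' T' : Finset (Fin n))
    (hS : S.card = r) (hT : T.card = r) (hST : Disjoint S T)
    (hS' : S'.card = r) (hT' : T'.card = r) (hST' : Disjoint S' T') :
    Pr n p (fun Γ => IsCliqueIn n Γ S ∧ IsCliqueIn n Γ T ∧
        IsCliqueIn n Γ S' ∧ IsCliqueIn n Γ T') =
      p ^ ((4 * r.choose 2 : ℤ) - ((S ∩ S').card.choose 2 : ℤ) - ((T ∩ S').card.choose 2 : ℤ)
          - ((S ∩ T').card.choose 2 : ℤ) - ((T ∩ T').card.choose 2 : ℤ)) := by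
  have hcard := card_cliqueEdges_union_union hST hST'
  rw [hS, hT, hS', hT'] at hcard
  set E₀ := (cliqueEdges n S ∪ cliqueEdges n T) ∪ (cliqueEdges n S' ∪ cliqueEdges n T')
  have hevent : (fun Γ => IsCliqueIn n Γ S ∧ IsCliqueIn n Γ T ∧
      IsCliqueIn n Γ S' ∧ IsCliqueIn n Γ T') = (E₀ ⊆ ·) := by
    ext Γ
    simp only [E₀, isCliqueIn_iff_cliqueEdges_subset, union_subset_iff, and_assoc]
  rw [hevent, pr_superset, ← zpow_natCast]
  congr 1
  omega

/-- For disjoint `r`-element subsets `S, T` and disjoint `r`-element subsets `S', T'` with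
`a = |S∩S'|`, `b = |T∩S'|`, `c = |S∩T'|`, `d = |T∩T'|`, the probability that each of
`S, T, S', T'` induces a complete subgraph of `G(n,p)` equals
`p^{4·C(r,2) − C(a,2) − C(b,2) − C(c,2) − C(d,2)}`. -/
theorem stmt6 (r : ℕ) (hr : 1 ≤ r) (p : ℝ) (hp0 : 0 < p) (hp1 : p < 1) (n : ℕ)
    (S T S' T' : Finset (Fin n))
    (hS : S.card = r) (hT : T.card = r) (hST : Disjoint S T)
    (hS' : S'.card = r) (hT' : T'.card = r) (hST' : Disjoint S' T') :
    Pr n p (fun Γ => IsCliqueIn n Γ S ∧ IsCliqueIn n Γ T ∧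
        IsCliqueIn n Γ S' ∧ IsCliqueIn n Γ T') =
      p ^ ((4 * r.choose 2 : ℤ) - ((S ∩ S').card.choose 2 : ℤ) - ((T ∩ S').card.choose 2 : ℤ)
          - ((S ∩ T').card.choose 2 : ℤ) - ((T ∩ T').card.choose 2 : ℤ)) :=
  stmt6_general r p n S T S' T' hS hT hST hS' hT' hST'

end
end

section
/- Fix an integer r ≥ 1, a real number p with 0 < p < 1, and an integer n ≥ 4r. Let X = X_r be the number of (r,r)-bicliques in the Erdős–Rényi random graph G(n,p). Then E(X²)/(E X)² = Σ_{α∈D} F_α·q^{L(α)}, where q = 1/p and D, F_α, L(α) are defined in the context. -/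
open Finset Filter

noncomputable section

open Classical in
/-- `X_r(Γ)`: the number of `(r,r)`-bicliques of `Γ`, i.e. ordered pairs `(S,T)` of disjoint
`r`-element vertex subsets each inducing a complete subgraph of `Γ`. -/
def Xr (n r : ℕ) (Γ : RGraph n) : ℕ :=
  (Finset.univ.filter (fun ST : Finset (Fin n) × Finset (Fin n) =>
    ST.1.card = r ∧ ST.2.card = r ∧ Disjoint ST.1 ST.2 ∧
    IsCliqueIn n Γ ST.1 ∧ IsCliqueIn n Γ ST.2)).card

/-- The set `D` of vectors `(a,b,c,d)` of nonnegative integers with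
`a+b ≤ r`, `a+c ≤ r`, `c+d ≤ r`, `b+d ≤ r`. -/
def Dset (r : ℕ) : Finset (ℕ × ℕ × ℕ × ℕ) :=
  (Finset.range (r+1) ×ˢ Finset.range (r+1) ×ˢ Finset.range (r+1) ×ˢ Finset.range (r+1)).filter
    (fun α => α.1 + α.2.1 ≤ r ∧ α.1 + α.2.2.1 ≤ r ∧ α.2.2.1 + α.2.2.2 ≤ r ∧ α.2.1 + α.2.2.2 ≤ r)

/-- The coefficient `F_α` for `α = (a,b,c,d)`. -/
def Fa (n r : ℕ) (α : ℕ × ℕ × ℕ × ℕ) : ℝ :=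
  match α with
  | (a, b, c, d) =>
    ((r.factorial : ℝ) / ((a.factorial : ℝ) * c.factorial * (r - a - c).factorial)) *
    ((r.factorial : ℝ) / ((b.factorial : ℝ) * d.factorial * (r - b - d).factorial)) *
    (((n - 2*r).factorial : ℝ) /
      (((r - a - b).factorial : ℝ) * (r - c - d).factorial * (n - 4*r + a + b + c + d).factorial)) /
    ((n.factorial : ℝ) / ((r.factorial : ℝ) * r.factorial * (n - 2*r).factorial))

/-- `L(α) = C(a,2) + C(b,2) + C(c,2) + C(d,2)`. -/
def La (α : ℕ × ℕ × ℕ × ℕ) : ℕ :=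
  α.1.choose 2 + α.2.1.choose 2 + α.2.2.1.choose 2 + α.2.2.2.choose 2

/-- `T_α = F_α · q^{L(α)}` with `q = 1/p`. -/
def Ta (n r : ℕ) (p : ℝ) (α : ℕ × ℕ × ℕ × ℕ) : ℝ := Fa n r α * (p⁻¹) ^ (La α)

/-!
Write `X` as a sum, over the candidate pairs `y = (S, T)` of disjoint `r`-sets, of the indicator
that the edge set `E_y` of the two cliques is present. Edges are independent, so this event has
probability `p ^ |E_y| = p ^ (2 C(r,2))`, and `E(X²) = Σ_{y,z} p ^ |E_y ∪ E_z|`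
`= p ^ (4 C(r,2)) Σ_{y,z} q ^ |E_y ∩ E_z|`. The common edges of `y` and `z = (S', T')` are the
edges inside `S' ∩ S`, `T' ∩ S`, `S' ∩ T` and `T' ∩ T`, whose sizes form `α = (a, b, c, d) ∈ D`;
so `|E_y ∩ E_z| = L(α)`. For fixed `y`, a `z` of overlap type `α` is determined by its traces on
`S`, on `T` and on the other `n - 2r` vertices, which can be chosen independently; their number
divided by the number of candidate pairs is `F_α`.
-/

namespace DisjointPairs

variable {α : Type*} [DecidableEq α]

def disjointPairs (U : Finset α) : Finset (Finset α × Finset α) :=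
  {z ∈ U.powerset ×ˢ U.powerset | Disjoint z.1 z.2}

lemma mem_disjointPairs {U : Finset α} {z : Finset α × Finset α} :
    z ∈ disjointPairs U ↔ z.1 ⊆ U ∧ z.2 ⊆ U ∧ Disjoint z.1 z.2 := by
  simp [disjointPairs, and_assoc]

def pairCard (z : Finset α × Finset α) : ℕ × ℕ := (#z.1, #z.2)

lemma card_disjointPairs_pairCard (U : Finset α) (i j : ℕ) :
    #{z ∈ disjointPairs U | pairCard z = (i, j)} = (#U).choose i * (#U - i).choose j := by
  rw [card_eq_sum_card_fiberwise (f := Prod.fst) (t := U.powersetCard i) fun z hz => by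
    simp_all [mem_disjointPairs, pairCard]]
  rw [sum_const_nat (m := (#U - i).choose j), card_powersetCard]
  intro A hA
  rw [mem_powersetCard] at hA
  rw [← hA.2, ← card_sdiff_of_subset hA.1, ← card_powersetCard]
  refine card_nbij' Prod.snd (fun B => (A, B)) ?_ ?_ ?_ ?_
  · rintro ⟨A', B⟩
    simp only [mem_coe, mem_filter, mem_disjointPairs, pairCard, Prod.mk.injEq, mem_powersetCard,
      subset_sdiff]
    rintro ⟨⟨⟨-, hB, hAB⟩, -, hj⟩, rfl⟩
    exact ⟨⟨hB, hAB.symm⟩, hj⟩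
  · intro B
    simp only [mem_coe, mem_filter, mem_disjointPairs, pairCard, Prod.mk.injEq, mem_powersetCard,
      subset_sdiff]
    rintro ⟨⟨hB, hAB⟩, hj⟩
    exact ⟨⟨⟨hA.1, hB, hAB.symm⟩, trivial, hj⟩, trivial⟩
  · rintro ⟨A', B⟩ h
    simp_all
  · intro B _
    rfl

theorem card_filter_disjointPairs_split {U S : Finset α} (hS : S ⊆ U)
    (P Q : Finset α × Finset α → Prop) [DecidablePred P] [DecidablePred Q] :
    #{z ∈ disjointPairs U | P (z.map (· ∩ S) (· ∩ S)) ∧ Q (z.map (· \ S) (· \ S))} =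
      #{z ∈ disjointPairs S | P z} * #{z ∈ disjointPairs (U \ S) | Q z} := by
  have inter_eq {A B : Finset α} (hA : A ⊆ S) (hB : B ⊆ U \ S) : (A ∪ B) ∩ S = A := by
    grind
  have sdiff_eq {A B : Finset α} (hA : A ⊆ S) (hB : B ⊆ U \ S) : (A ∪ B) \ S = B := by
    grind
  rw [← card_product]
  refine card_nbij' (fun z => (z.map (· ∩ S) (· ∩ S), z.map (· \ S) (· \ S)))
    (fun w => (w.1.1 ∪ w.2.1, w.1.2 ∪ w.2.2)) ?_ ?_ ?_ ?_
  · rintro ⟨A, B⟩ h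
    simp only [mem_coe, mem_filter, mem_product, mem_disjointPairs, Prod.map] at h ⊢
    obtain ⟨⟨hA, hB, hAB⟩, hP, hQ⟩ := h
    exact ⟨⟨⟨inter_subset_right, inter_subset_right, hAB.mono inter_subset_left inter_subset_left⟩,
      hP⟩, ⟨sdiff_subset_sdiff hA le_rfl, sdiff_subset_sdiff hB le_rfl,
      hAB.mono sdiff_subset sdiff_subset⟩, hQ⟩
  · rintro ⟨⟨A₁, B₁⟩, A₂, B₂⟩ h
    simp only [mem_coe, mem_filter, mem_product, mem_disjointPairs] at h
    obtain ⟨⟨⟨hA₁, hB₁, h₁⟩, hP⟩, ⟨hA₂, hB₂, h₂⟩, hQ⟩ := h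
    simp only [mem_coe, mem_filter, mem_disjointPairs, Prod.map, inter_eq hA₁ hA₂,
      inter_eq hB₁ hB₂, sdiff_eq hA₁ hA₂, sdiff_eq hB₁ hB₂, disjoint_union_left,
      disjoint_union_right]
    exact ⟨⟨union_subset (hA₁.trans hS) (hA₂.trans sdiff_subset),
      union_subset (hB₁.trans hS) (hB₂.trans sdiff_subset),
      ⟨h₁, (disjoint_sdiff.mono hB₁ hA₂).symm⟩, disjoint_sdiff.mono hA₁ hB₂, h₂⟩, hP, hQ⟩
  · rintro ⟨A, B⟩ -
    exact Prod.ext (sup_inf_sdiff A S) (sup_inf_sdiff B S)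
  · rintro ⟨⟨A₁, B₁⟩, A₂, B₂⟩ h
    simp only [mem_coe, mem_filter, mem_product, mem_disjointPairs] at h
    simp [inter_eq, sdiff_eq, h]

lemma card_union_inter_of_disjoint {A B : Finset α} (h : Disjoint A B) (X : Finset α) :
    #((A ∪ B) ∩ X) = #(A ∩ X) + #(B ∩ X) := by
  rw [union_inter_distrib_right,
    card_union_of_disjoint (h.mono inter_subset_left inter_subset_left)]

lemma card_inter_add_card_inter_le {A B : Finset α} (h : Disjoint A B) (X : Finset α) :
    #(A ∩ X) + #(B ∩ X) ≤ #X :=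
  card_union_inter_of_disjoint h X ▸ card_le_card inter_subset_right

end DisjointPairs

namespace Biclique

open DisjointPairs

variable {n : ℕ}

def edgesWithin (S : Finset (Fin n)) : Finset (EdgeType n) := {e | e.1 ∈ S.sym2}

lemma mem_edgesWithin {S : Finset (Fin n)} {e : EdgeType n} :
    e ∈ edgesWithin S ↔ ∀ v ∈ e.1, v ∈ S := by
  simp [edgesWithin, mem_sym2_iff]

lemma mk_mem_edgesWithin {S : Finset (Fin n)} {x y : Fin n} (h : ¬s(x, y).IsDiag) :
    (⟨s(x, y), h⟩ : EdgeType n) ∈ edgesWithin S ↔ x ∈ S ∧ y ∈ S :=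
  mem_edgesWithin.trans (mem_sym2_iff.symm.trans mk_mem_sym2_iff)

lemma card_edgesWithin (S : Finset (Fin n)) : #(edgesWithin S) = (#S).choose 2 := by
  rw [← Sym2.card_image_offDiag]
  refine card_bij (fun e _ => e.1) ?_ (fun _ _ _ _ => Subtype.ext) ?_
  · rintro ⟨e, he⟩ heS
    induction e using Sym2.ind with
    | _ x y =>
      have hxy : x ≠ y := by simpa [Sym2.mk_isDiag_iff] using he
      obtain ⟨hx, hy⟩ := (mk_mem_edgesWithin he).1 heS
      exact mem_image.2 ⟨(x, y), mem_offDiag.2 ⟨hx, hy, hxy⟩, rfl⟩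
  · intro z hz
    obtain ⟨⟨x, y⟩, hxy, rfl⟩ := mem_image.1 hz
    obtain ⟨hx, hy, hne⟩ := mem_offDiag.1 hxy
    have he : ¬s(x, y).IsDiag := by simpa [Sym2.mk_isDiag_iff] using hne
    exact ⟨⟨s(x, y), he⟩, (mk_mem_edgesWithin he).2 ⟨hx, hy⟩, rfl⟩

lemma edgesWithin_inter (S T : Finset (Fin n)) :
    edgesWithin S ∩ edgesWithin T = edgesWithin (S ∩ T) := by
  ext e
  simp only [mem_inter, mem_edgesWithin, forall_and]

lemma disjoint_edgesWithin {S T : Finset (Fin n)} (h : Disjoint S T) :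
    Disjoint (edgesWithin S) (edgesWithin T) := by
  rw [disjoint_iff_inter_eq_empty, edgesWithin_inter, disjoint_iff_inter_eq_empty.1 h,
    eq_empty_iff_forall_notMem]
  rintro ⟨e, he⟩ h
  induction e using Sym2.ind with
  | _ x y => simpa using mem_edgesWithin.1 h x (Sym2.mem_mk_left x y)

lemma isCliqueIn_iff_edgesWithin_subset {Γ : RGraph n} {S : Finset (Fin n)} :
    IsCliqueIn n Γ S ↔ edgesWithin S ⊆ Γ := by
  constructor
  · rintro hS ⟨e, he⟩ heS
    induction e using Sym2.ind with
    | _ x y =>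
      have hxy : x ≠ y := by simpa [Sym2.mk_isDiag_iff] using he
      obtain ⟨hx, hy⟩ := (mk_mem_edgesWithin he).1 heS
      exact hS x hx y hy hxy
  · exact fun hS v hv w hw _ => hS ((mk_mem_edgesWithin _).2 ⟨hv, hw⟩)

def bicliqueEdges (z : Finset (Fin n) × Finset (Fin n)) : Finset (EdgeType n) :=
  edgesWithin z.1 ∪ edgesWithin z.2

variable (n) in
def bicliqueCandidates (r : ℕ) : Finset (Finset (Fin n) × Finset (Fin n)) :=
  {z ∈ disjointPairs univ | pairCard z = (r, r)}

lemma mem_bicliqueCandidates {r : ℕ} {z : Finset (Fin n) × Finset (Fin n)} :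
    z ∈ bicliqueCandidates n r ↔ Disjoint z.1 z.2 ∧ #z.1 = r ∧ #z.2 = r := by
  simp [bicliqueCandidates, mem_disjointPairs, pairCard]

lemma card_bicliqueCandidates (n r : ℕ) :
    #(bicliqueCandidates n r) = n.choose r * (n - r).choose r := by
  rw [bicliqueCandidates, card_disjointPairs_pairCard, card_univ, Fintype.card_fin]

lemma card_bicliqueEdges {r : ℕ} {z : Finset (Fin n) × Finset (Fin n)}
    (hz : z ∈ bicliqueCandidates n r) : #(bicliqueEdges z) = 2 * r.choose 2 := by
  obtain ⟨h, h₁, h₂⟩ := mem_bicliqueCandidates.1 hz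
  rw [bicliqueEdges, card_union_of_disjoint (disjoint_edgesWithin h), card_edgesWithin,
    card_edgesWithin, h₁, h₂, two_mul]

def overlapType (y z : Finset (Fin n) × Finset (Fin n)) : ℕ × ℕ × ℕ × ℕ :=
  (#(z.1 ∩ y.1), #(z.2 ∩ y.1), #(z.1 ∩ y.2), #(z.2 ∩ y.2))

lemma overlapType_mem_Dset {r : ℕ} {y z : Finset (Fin n) × Finset (Fin n)}
    (hy : y ∈ bicliqueCandidates n r) (hz : z ∈ bicliqueCandidates n r) :
    overlapType y z ∈ Dset r := by
  obtain ⟨hy, hy₁, hy₂⟩ := mem_bicliqueCandidates.1 hy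
  obtain ⟨hz, hz₁, hz₂⟩ := mem_bicliqueCandidates.1 hz
  have hab := card_inter_add_card_inter_le hz y.1
  have hcd := card_inter_add_card_inter_le hz y.2
  have hac := card_inter_add_card_inter_le hy z.1
  have hbd := card_inter_add_card_inter_le hy z.2
  rw [inter_comm y.1, inter_comm y.2] at hac hbd
  simp only [Dset, overlapType, mem_filter, mem_product, mem_range]
  omega

lemma card_bicliqueEdges_inter {r : ℕ} {y z : Finset (Fin n) × Finset (Fin n)}
    (hy : y ∈ bicliqueCandidates n r) (hz : z ∈ bicliqueCandidates n r) :
    #(bicliqueEdges y ∩ bicliqueEdges z) = La (overlapType y z) := by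
  have hy := disjoint_edgesWithin (mem_bicliqueCandidates.1 hy).1
  have hz := disjoint_edgesWithin (mem_bicliqueCandidates.1 hz).1
  rw [bicliqueEdges, bicliqueEdges, card_union_inter_of_disjoint hy, inter_comm (edgesWithin y.1),
    inter_comm (edgesWithin y.2), card_union_inter_of_disjoint hz, card_union_inter_of_disjoint hz]
  simp only [edgesWithin_inter, card_edgesWithin, La, overlapType]
  ring

variable (n) in
def overlapCount (r : ℕ) : ℕ × ℕ × ℕ × ℕ → ℕ
  | (a, b, c, d) => r.choose a * (r - a).choose b * (r.choose c * (r - c).choose d *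
      ((n - 2 * r).choose (r - a - c) * (n - 2 * r - (r - a - c)).choose (r - b - d)))

lemma card_filter_overlapType {r : ℕ} {y : Finset (Fin n) × Finset (Fin n)}
    (hy : y ∈ bicliqueCandidates n r) {β : ℕ × ℕ × ℕ × ℕ} (hβ : β ∈ Dset r) :
    #{z ∈ bicliqueCandidates n r | overlapType y z = β} = overlapCount n r β := by
  obtain ⟨S, T⟩ := y
  obtain ⟨a, b, c, d⟩ := β
  obtain ⟨hST, hS, hT⟩ : Disjoint S T ∧ #S = r ∧ #T = r := mem_bicliqueCandidates.1 hy
  simp only [Dset, mem_filter, mem_product, mem_range] at hβ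
  have hTS : T ⊆ univ \ S := subset_sdiff.2 ⟨subset_univ T, hST.symm⟩
  have hrest : #((univ \ S) \ T) = n - 2 * r := by
    rw [card_sdiff_of_subset hTS, card_univ_sdiff, Fintype.card_fin, hS, hT]
    omega
  have decompose (Z : Finset (Fin n)) :
      (Z \ S) ∩ T = Z ∩ T ∧ #Z = #(Z ∩ S) + #(Z ∩ T) + #((Z \ S) \ T) := by
    have h : (Z \ S) ∩ T = Z ∩ T := by
      rw [sdiff_inter_right_comm, sdiff_eq_self_of_disjoint (hST.symm.mono_left inter_subset_right)]
    refine ⟨h, ?_⟩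
    rw [← h, add_assoc, card_inter_add_card_sdiff, card_inter_add_card_sdiff]
  calc #{z ∈ bicliqueCandidates n r | overlapType (S, T) z = (a, b, c, d)}
      = #{z ∈ disjointPairs univ | pairCard (z.map (· ∩ S) (· ∩ S)) = (a, b) ∧
          (pairCard ((z.map (· \ S) (· \ S)).map (· ∩ T) (· ∩ T)) = (c, d) ∧
            pairCard ((z.map (· \ S) (· \ S)).map (· \ T) (· \ T)) = (r - a - c, r - b - d))} := by
        rw [bicliqueCandidates, filter_filter]
        refine congrArg card (filter_congr fun z _ => ?_)
        obtain ⟨h₁, hc₁⟩ := decompose z.1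
        obtain ⟨h₂, hc₂⟩ := decompose z.2
        simp only [pairCard, overlapType, Prod.map, Prod.mk.injEq, h₁, h₂]
        omega
    _ = #{z ∈ disjointPairs S | pairCard z = (a, b)} *
          (#{z ∈ disjointPairs T | pairCard z = (c, d)} *
            #{z ∈ disjointPairs ((univ \ S) \ T) | pairCard z = (r - a - c, r - b - d)}) := by
        rw [card_filter_disjointPairs_split (subset_univ S) (fun w => pairCard w = (a, b))
          (fun w => pairCard (w.map (· ∩ T) (· ∩ T)) = (c, d) ∧
            pairCard (w.map (· \ T) (· \ T)) = (r - a - c, r - b - d)),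
          card_filter_disjointPairs_split hTS (fun w => pairCard w = (c, d))
            (fun w => pairCard w = (r - a - c, r - b - d))]
    _ = overlapCount n r (a, b, c, d) := by
        rw [card_disjointPairs_pairCard, card_disjointPairs_pairCard, card_disjointPairs_pairCard,
          hS, hT, hrest, overlapCount]

lemma sum_overlapType (n r : ℕ) (f : ℕ × ℕ × ℕ × ℕ → ℝ) :
    ∑ w ∈ bicliqueCandidates n r ×ˢ bicliqueCandidates n r, f (overlapType w.1 w.2) =
      #(bicliqueCandidates n r) * ∑ β ∈ Dset r, overlapCount n r β * f β := by
  rw [sum_product, ← nsmul_eq_mul, ← sum_const]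
  refine sum_congr rfl fun y hy => ?_
  rw [← sum_fiberwise_of_maps_to' (fun z hz => overlapType_mem_Dset hy hz) f]
  exact sum_congr rfl fun β hβ => by rw [sum_const, card_filter_overlapType hy hβ, nsmul_eq_mul]

lemma Fa_mul_card_bicliqueCandidates {n r : ℕ} (hn : 4 * r ≤ n) {β : ℕ × ℕ × ℕ × ℕ}
    (hβ : β ∈ Dset r) : Fa n r β * #(bicliqueCandidates n r) = overlapCount n r β := by
  obtain ⟨a, b, c, d⟩ := β
  simp only [Dset, mem_filter, mem_product, mem_range] at hβ
  rw [card_bicliqueCandidates, Fa, overlapCount]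
  push_cast
  rw [Nat.cast_choose ℝ (show a ≤ r by omega), Nat.cast_choose ℝ (show b ≤ r - a by omega),
    Nat.cast_choose ℝ (show c ≤ r by omega), Nat.cast_choose ℝ (show d ≤ r - c by omega),
    Nat.cast_choose ℝ (show r - a - c ≤ n - 2 * r by omega),
    Nat.cast_choose ℝ (show r - b - d ≤ n - 2 * r - (r - a - c) by omega),
    Nat.cast_choose ℝ (show r ≤ n by omega), Nat.cast_choose ℝ (show r ≤ n - r by omega),
    show n - 2 * r - (r - a - c) - (r - b - d) = n - 4 * r + a + b + c + d by omega,
    show n - r - r = n - 2 * r by omega]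
  field_simp

lemma card_edgeType (n : ℕ) : Fintype.card (EdgeType n) = n.choose 2 := by
  have h : Fintype.card {e : Sym2 (Fin n) // ¬e.IsDiag} = n.choose 2 := by
    rw [Sym2.card_subtype_not_diag, Fintype.card_fin]
  exact (Fintype.card_congr (Equiv.refl _)).trans h

-- The edges are independent: `∑_Γ wt Γ · [E ⊆ Γ]` is the expansion of `∏ₑ (p + [e ∉ E] (1 - p))`.
lemma EV_indicator_subset (p : ℝ) (E : Finset (EdgeType n)) :
    EV n p (fun Γ => if E ⊆ Γ then 1 else 0) = p ^ #E := by
  calc EV n p (fun Γ => if E ⊆ Γ then 1 else 0)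
      = ∑ Γ : RGraph n, (∏ _ ∈ Γ, p) * ∏ e ∈ univ \ Γ, if e ∉ E then 1 - p else 0 := by
        refine sum_congr rfl fun Γ _ => ?_
        have hE : (∀ e ∈ univ \ Γ, e ∉ E) ↔ E ⊆ Γ :=
          ⟨fun h e he => by_contra fun hΓ => h e (mem_sdiff.2 ⟨mem_univ e, hΓ⟩) he,
            fun h e he heE => (mem_sdiff.1 he).2 (h heE)⟩
        rw [wt, prod_const, prod_ite_zero, prod_const, card_univ_sdiff, card_edgeType]
        simp only [hE, mul_ite, mul_one, mul_zero]
    _ = ∏ e, (p + if e ∉ E then 1 - p else 0) := by rw [prod_add, powerset_univ]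
    _ = ∏ e, if e ∈ E then p else 1 := prod_congr rfl fun e _ => by split_ifs <;> ring
    _ = p ^ #E := by rw [prod_ite_mem, univ_inter, prod_const]

lemma EV_sum {ι : Type*} (p : ℝ) (s : Finset ι) (f : ι → RGraph n → ℝ) :
    EV n p (fun Γ => ∑ i ∈ s, f i Γ) = ∑ i ∈ s, EV n p (f i) := by
  simp only [EV, mul_sum]
  exact sum_comm

lemma Xr_eq_sum (r : ℕ) (Γ : RGraph n) :
    (Xr n r Γ : ℝ) = ∑ z ∈ bicliqueCandidates n r, if bicliqueEdges z ⊆ Γ then 1 else 0 := by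
  rw [← natCast_card_filter, Xr]
  congr 2
  ext z
  simp only [mem_filter, mem_univ, true_and, mem_bicliqueCandidates, bicliqueEdges,
    union_subset_iff, isCliqueIn_iff_edgesWithin_subset]
  tauto

lemma EV_Xr (n r : ℕ) (p : ℝ) :
    EV n p (fun Γ => (Xr n r Γ : ℝ)) = #(bicliqueCandidates n r) * p ^ (2 * r.choose 2) := by
  simp only [Xr_eq_sum, EV_sum, EV_indicator_subset]
  rw [sum_congr rfl fun z hz => by rw [card_bicliqueEdges hz], sum_const, nsmul_eq_mul]

lemma EV_Xr_sq (n r : ℕ) {p : ℝ} (hp : p ≠ 0) :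
    EV n p (fun Γ => (Xr n r Γ : ℝ) ^ 2) = p ^ (4 * r.choose 2) *
      ∑ w ∈ bicliqueCandidates n r ×ˢ bicliqueCandidates n r, p⁻¹ ^ La (overlapType w.1 w.2) := by
  have hsq (Γ : RGraph n) : (Xr n r Γ : ℝ) ^ 2 =
      ∑ w ∈ bicliqueCandidates n r ×ˢ bicliqueCandidates n r,
        if bicliqueEdges w.1 ∪ bicliqueEdges w.2 ⊆ Γ then 1 else 0 := by
    simp only [sq, Xr_eq_sum, sum_mul_sum, sum_product, ite_zero_mul_ite_zero, mul_one,
      union_subset_iff]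
  simp only [hsq, EV_sum, EV_indicator_subset, mul_sum]
  refine sum_congr rfl fun w hw => ?_
  obtain ⟨hy, hz⟩ := mem_product.1 hw
  have hunion := card_union_add_card_inter (bicliqueEdges w.1) (bicliqueEdges w.2)
  rw [card_bicliqueEdges hy, card_bicliqueEdges hz] at hunion
  rw [← card_bicliqueEdges_inter hy hz, inv_pow, eq_mul_inv_iff_mul_eq₀ (pow_ne_zero _ hp),
    ← pow_add, hunion]
  ring

end Biclique

open Biclique in
theorem stmt7_general (r : ℕ) (p : ℝ) (hp0 : 0 < p)
    (n : ℕ) (hn : 4 * r ≤ n) :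
    EV n p (fun Γ => (Xr n r Γ : ℝ) ^ 2) / (EV n p (fun Γ => (Xr n r Γ : ℝ))) ^ 2 =
      ∑ α ∈ Dset r, Fa n r α * (p⁻¹) ^ (La α) := by
  have hC : (#(bicliqueCandidates n r) : ℝ) ≠ 0 := by
    rw [card_bicliqueCandidates]
    exact Nat.cast_ne_zero.2 (mul_ne_zero (Nat.choose_pos (by omega)).ne'
      (Nat.choose_pos (by omega)).ne')
  rw [EV_Xr_sq n r hp0.ne', EV_Xr, sum_overlapType n r (fun β => p⁻¹ ^ La β), mul_sum, mul_sum,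
    sum_div]
  refine sum_congr rfl fun β hβ => ?_
  rw [← Fa_mul_card_bicliqueCandidates hn hβ]
  field_simp
  ring

/-- Second moment formula: `E(X²)/(E X)² = Σ_{α ∈ D} F_α · q^{L(α)}`, where `X` is the number
of `(r,r)`-bicliques in `G(n,p)` and `q = 1/p`. -/
theorem stmt7 (r : ℕ) (hr : 1 ≤ r) (p : ℝ) (hp0 : 0 < p) (hp1 : p < 1)
    (n : ℕ) (hn : 4 * r ≤ n) :
    EV n p (fun Γ => (Xr n r Γ : ℝ) ^ 2) / (EV n p (fun Γ => (Xr n r Γ : ℝ))) ^ 2 =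
      ∑ α ∈ Dset r, Fa n r α * (p⁻¹) ^ (La α) :=
  stmt7_general r p hp0 n hn

end
end

section
/- Fix a real number p with 0 < p < 1 and ε with 0 < ε < 1/2, set q = 1/p, and for each n let r = r(n) = ⌊z(n,p) − ε⌋. Let T_{(r,0,0,0)} = [C(n−2r, r) / (n!/(r!·r!·(n−2r)!))]·q^{C(r,2)}. Then r·T_{(r,0,0,0)} → 0 as n → ∞. -/
/-! Write `q = 1/p`, `L = log_q n` and `r = ⌊z − ε⌋`. Since `r ≤ z − ε` and `r ≤ 2L`, the
shape of `z` gives `r·q^{(r−1)/2} ≤ e·n·q^{−ε/2}`. Once `4r² ≤ n`,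
`T_{(r,0,0,0)} ≤ 2·r!·q^{C(r,2)}/n^r`, and with Stirling's bound `r! ≤ e·√r·(r/e)^r` and
`q^{C(r,2)} = (q^{(r−1)/2})^r` this yields `r·T_{(r,0,0,0)} ≤ 2e·r²·q^{−εr/2}`, which tends to `0`
because `r → ∞`. -/

open Finset Filter

noncomputable section

open Real
open scoped Nat

theorem Nat.factorial_le_exp_one_mul_sqrt_mul_pow {n : ℕ} (hn : n ≠ 0) :
    (n ! : ℝ) ≤ exp 1 * √n * (n / exp 1) ^ n := by
  have hle : Stirling.stirlingSeq n ≤ exp 1 / √2 := by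
    obtain ⟨k, rfl⟩ := Nat.exists_eq_succ_of_ne_zero hn
    simpa using Stirling.stirlingSeq'_antitone (Nat.zero_le k)
  have hpos : 0 < √(2 * n : ℝ) * (n / exp 1) ^ n := by
    have : (0 : ℝ) < n := by exact_mod_cast Nat.pos_of_ne_zero hn
    positivity
  rw [Stirling.stirlingSeq, div_le_iff₀ hpos, Real.sqrt_mul zero_le_two] at hle
  calc (n ! : ℝ) ≤ exp 1 / √2 * (√2 * √n * (n / exp 1) ^ n) := hle
    _ = exp 1 * √n * (n / exp 1) ^ n := by field_simp

theorem pow_le_two_mul_sub_pow {n r : ℕ} (h : 4 * r ^ 2 ≤ n) :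
    (n : ℝ) ^ r ≤ 2 * ((n - 2 * r : ℕ) : ℝ) ^ r := by
  rcases Nat.eq_zero_or_pos r with rfl | hr
  · norm_num
  have hn : (0 : ℝ) < n := by exact_mod_cast (show 0 < n by nlinarith)
  have h' : (4 * r ^ 2 : ℝ) ≤ n := by exact_mod_cast h
  have hr' : (1 : ℝ) ≤ r := by exact_mod_cast hr
  have hsub : ((n - 2 * r : ℕ) : ℝ) = n * (1 + -(2 * r / n)) := by
    rw [Nat.cast_sub (by nlinarith)]; field_simp; push_cast; ring
  have hbern := one_add_mul_le_pow (a := -(2 * r / n : ℝ)) (by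
    rw [neg_le_neg_iff, div_le_iff₀ hn]; nlinarith) r
  have half : (1 : ℝ) / 2 ≤ 1 + r * -(2 * r / n) := by
    rw [mul_neg, ← mul_div_assoc, le_add_neg_iff_add_le, ← le_sub_iff_add_le', div_le_iff₀ hn]
    nlinarith
  rw [hsub, mul_pow]
  nlinarith [pow_pos hn r]

theorem choose_div_multinomial_le {n r : ℕ} (h : 4 * r ^ 2 ≤ n) :
    ((n - 2 * r).choose r : ℝ) / ((n ! : ℝ) / ((r ! : ℝ) * r ! * (n - 2 * r)!)) ≤
      2 * r ! / n ^ r := by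
  rcases Nat.eq_zero_or_pos r with rfl | hr
  · simp only [Nat.choose_zero_right, Nat.factorial_zero, Nat.cast_one, one_mul, mul_zero,
      Nat.sub_zero, pow_zero, div_one]
    rw [div_self (by positivity)]
    norm_num
  have h2r : 2 * r < n := by nlinarith
  set m := n - 2 * r
  have hm0 : (0 : ℝ) < m := by exact_mod_cast (show 0 < m by omega)
  have hfact : (n ! : ℝ) = m ! * n.descFactorial (2 * r) := by
    exact_mod_cast (Nat.factorial_mul_descFactorial h2r.le).symm
  have hdesc : (m : ℝ) ^ (2 * r) ≤ n.descFactorial (2 * r) := by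
    exact_mod_cast
      (Nat.pow_le_pow_left (by omega) _).trans (Nat.pow_sub_le_descFactorial n (2 * r))
  calc ((m.choose r : ℕ) : ℝ) / ((n ! : ℝ) / ((r ! : ℝ) * r ! * m !))
      = (m.choose r : ℝ) * r ! * r ! / n.descFactorial (2 * r) := by
        rw [hfact]; field_simp
    _ ≤ ((m : ℝ) ^ r / r !) * r ! * r ! / (m : ℝ) ^ (2 * r) := by
        gcongr
        exact Nat.choose_le_pow_div r m
    _ = r ! / (m : ℝ) ^ r := by
        rw [two_mul, pow_add]; field_simp
    _ ≤ 2 * r ! / n ^ r := by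
        have hn : (0 : ℝ) < n := by exact_mod_cast (show 0 < n by omega)
        rw [div_le_div_iff₀ (pow_pos hm0 r) (pow_pos hn r)]
        have := pow_le_two_mul_sub_pow h
        have : (0 : ℝ) < r ! := by positivity
        nlinarith

/-- The paper's `T_{(r,0,0,0)}`, with `q = 1/p`. -/
def cornerT (q : ℝ) (n r : ℕ) : ℝ :=
  ((n - 2 * r).choose r : ℝ) / ((n ! : ℝ) / ((r ! : ℝ) * r ! * (n - 2 * r)!)) *
    q ^ (r.choose 2)

theorem mul_cornerT_le {q c : ℝ} (hq : 0 ≤ q) (hc : 0 ≤ c) {n r : ℕ} (hr : r ≠ 0)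
    (h4 : 4 * r ^ 2 ≤ n) (hqr : r * q ^ ((r - 1 : ℝ) / 2) ≤ exp 1 * n * c) :
    (r : ℝ) * cornerT q n r ≤ 2 * exp 1 * (r ^ 2 * c ^ r) := by
  have hr1 : (1 : ℝ) ≤ r := by exact_mod_cast Nat.one_le_iff_ne_zero.mpr hr
  have hn : (0 : ℝ) < n := by exact_mod_cast (show 0 < n by nlinarith [Nat.pos_of_ne_zero hr])
  have hqC : q ^ r.choose 2 = (q ^ ((r - 1 : ℝ) / 2)) ^ r := by
    rw [← Real.rpow_natCast, ← Real.rpow_natCast, ← Real.rpow_mul hq, Nat.cast_choose_two]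
    ring_nf
  have hbase : r * q ^ ((r - 1 : ℝ) / 2) / (exp 1 * n) ≤ c :=
    div_le_of_le_mul₀ (by positivity) hc (by linarith)
  calc (r : ℝ) * cornerT q n r ≤ r * (2 * r ! / n ^ r * q ^ r.choose 2) := by
        unfold cornerT; gcongr _ * (?_ * _); exact choose_div_multinomial_le h4
    _ ≤ r * (2 * (exp 1 * √r * (r / exp 1) ^ r) / n ^ r * q ^ r.choose 2) := by
        gcongr; exact Nat.factorial_le_exp_one_mul_sqrt_mul_pow hr
    _ = 2 * exp 1 * (r * √r * (r * q ^ ((r - 1 : ℝ) / 2) / (exp 1 * n)) ^ r) := by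
        rw [hqC]; simp only [div_pow, mul_pow]; field_simp
    _ ≤ 2 * exp 1 * (r ^ 2 * c ^ r) := by
        gcongr
        rw [sq]; gcongr
        exact Real.sqrt_le_self_iff.mpr (Or.inr hr1)

theorem Real.eventually_logb_pow_le_mul {b c : ℝ} (hb : 1 < b) (hc : 0 < c) (k : ℕ) :
    ∀ᶠ x in atTop, logb b x ^ k ≤ c * x := by
  have hlb : 0 < log b := log_pos hb
  filter_upwards [(isLittleO_pow_log_id_atTop (n := k)).def (by positivity : 0 < c * log b ^ k),
    eventually_ge_atTop 0] with x hx hx0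
  rw [Real.norm_eq_abs, Real.norm_eq_abs, id, abs_of_nonneg hx0] at hx
  rw [logb, div_pow, div_le_iff₀ (by positivity)]
  linarith [le_abs_self (log x ^ k)]

theorem Real.tendsto_logb_natCast_atTop {b : ℝ} (hb : 1 < b) :
    Tendsto (fun n : ℕ => logb b n) atTop atTop :=
  (tendsto_logb_atTop hb).comp tendsto_natCast_atTop_atTop

theorem tendsto_zf_atTop {p : ℝ} (hq : 1 < p⁻¹) : Tendsto (zf p) atTop atTop := by
  have hL := tendsto_logb_natCast_atTop hq
  refine tendsto_atTop_mono' atTop ?_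
    (tendsto_atTop_add_const_right _ (2 * logb p⁻¹ (exp 1 / 2) + 1) hL)
  filter_upwards [hL.eventually (eventually_logb_pow_le_mul hq one_half_pos 1)] with n hn
  rw [pow_one] at hn
  simp only [zf]
  linarith

theorem eventually_zf_le_two_mul_logb {p : ℝ} (hq : 1 < p⁻¹) :
    ∀ᶠ n : ℕ in atTop, zf p n ≤ 2 * logb p⁻¹ n := by
  filter_upwards [((tendsto_logb_atTop hq).comp (tendsto_logb_natCast_atTop hq)).eventually_ge_atTop
    (logb p⁻¹ (exp 1 / 2) + 1 / 2)] with n hn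
  simp only [zf, Function.comp_apply] at hn ⊢
  linarith

theorem mul_rpow_le_of_le_zf {p ε r : ℝ} (hq : 1 < p⁻¹) {n : ℕ} (hL : 0 < logb p⁻¹ n)
    (hr : 0 < r) (hrz : r ≤ zf p n - ε) (hrL : r ≤ 2 * logb p⁻¹ n) :
    r * p⁻¹ ^ ((r - 1) / 2) ≤ exp 1 * n * p⁻¹ ^ (-(ε / 2)) := by
  have hq0 : 0 < p⁻¹ := by linarith
  have hn : (0 : ℝ) < n := by
    rcases n.eq_zero_or_pos with rfl | h
    · simp at hL
    · exact_mod_cast h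
  have hlogb_r : logb p⁻¹ r ≤ logb p⁻¹ 2 + logb p⁻¹ (logb p⁻¹ n) := by
    rw [← logb_mul two_ne_zero hL.ne']
    exact logb_le_logb_of_le hq hr hrL
  have hlogb_e2 : logb p⁻¹ (exp 1 / 2) = logb p⁻¹ (exp 1) - logb p⁻¹ 2 :=
    logb_div (exp_ne_zero 1) two_ne_zero
  rw [← logb_le_logb hq (by positivity) (by positivity), logb_mul hr.ne' (by positivity),
    logb_mul (by positivity) (by positivity), logb_mul (exp_ne_zero 1) hn.ne',
    logb_rpow hq0 hq.ne', logb_rpow hq0 hq.ne']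
  simp only [zf] at hrz
  linarith

theorem eventually_floor_zf_sub_bounds {p ε : ℝ} (hq : 1 < p⁻¹) (hε : 0 ≤ ε) :
    ∀ᶠ n : ℕ in atTop, ⌊zf p n - ε⌋₊ ≠ 0 ∧ 4 * ⌊zf p n - ε⌋₊ ^ 2 ≤ n ∧
      (⌊zf p n - ε⌋₊ : ℝ) * p⁻¹ ^ ((⌊zf p n - ε⌋₊ - 1 : ℝ) / 2) ≤
        exp 1 * n * p⁻¹ ^ (-(ε / 2)) := by
  have hL := tendsto_logb_natCast_atTop hq
  filter_upwards [(tendsto_zf_atTop hq).eventually_ge_atTop (1 + ε),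
    eventually_zf_le_two_mul_logb hq, hL.eventually_ge_atTop 1,
    tendsto_natCast_atTop_atTop.eventually
      (eventually_logb_pow_le_mul hq (by norm_num : (0 : ℝ) < 1 / 16) 2)]
    with n hz1 hzL hL1 hL16
  set r := ⌊zf p n - ε⌋₊
  have hr1 : 1 ≤ r := Nat.le_floor (by push_cast; linarith)
  have hr1' : (1 : ℝ) ≤ r := by exact_mod_cast hr1
  have hrz : (r : ℝ) ≤ zf p n - ε := Nat.floor_le (by linarith)
  refine ⟨by omega, ?_, mul_rpow_le_of_le_zf hq (by linarith) (by linarith) hrz (by linarith)⟩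
  have : (4 * r ^ 2 : ℝ) ≤ n := by nlinarith
  exact_mod_cast this

theorem stmt11_general (p ε : ℝ) (hp0 : 0 < p) (hp1 : p < 1) (hε : 0 < ε) :
    Tendsto (fun n : ℕ =>
        (⌊zf p n - ε⌋.toNat : ℝ) *
          ((((n - 2 * ⌊zf p n - ε⌋.toNat).choose ⌊zf p n - ε⌋.toNat : ℝ) /
            ((n.factorial : ℝ) / ((⌊zf p n - ε⌋.toNat.factorial : ℝ) *
              ⌊zf p n - ε⌋.toNat.factorial * (n - 2 * ⌊zf p n - ε⌋.toNat).factorial))) *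
            (p⁻¹) ^ (⌊zf p n - ε⌋.toNat.choose 2)))
      atTop (nhds 0) := by
  have hq : 1 < p⁻¹ := (one_lt_inv₀ hp0).mpr hp1
  have hc : |p⁻¹ ^ (-(ε / 2))| < 1 := by
    rw [abs_of_pos (rpow_pos_of_pos (by linarith) _)]
    exact rpow_lt_one_of_one_lt_of_neg hq (by linarith)
  have hr : Tendsto (fun n : ℕ => ⌊zf p n - ε⌋₊) atTop atTop :=
    tendsto_nat_floor_atTop.comp (tendsto_atTop_add_const_right _ (-ε) (tendsto_zf_atTop hq))
  have hbound :=
    ((tendsto_pow_const_mul_const_pow_of_abs_lt_one 2 hc).const_mul (2 * exp 1)).comp hr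
  rw [mul_zero] at hbound
  simp only [Int.floor_toNat]
  refine squeeze_zero' (Eventually.of_forall fun n => by positivity) ?_ hbound
  filter_upwards [eventually_floor_zf_sub_bounds hq hε.le] with n ⟨hr0, h4, hqr⟩
  exact mul_cornerT_le (by linarith) (by positivity) hr0 h4 hqr

/-- For `r = r(n) = ⌊z(n,p) − ε⌋` and
`T_{(r,0,0,0)} = [C(n−2r,r)/(n!/(r!·r!·(n−2r)!))]·q^{C(r,2)}`,
one has `r·T_{(r,0,0,0)} → 0` as `n → ∞`. -/
theorem stmt11 (p ε : ℝ) (hp0 : 0 < p) (hp1 : p < 1) (hε : 0 < ε) (hε' : ε < 1/2) :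
    Tendsto (fun n : ℕ =>
        (⌊zf p n - ε⌋.toNat : ℝ) *
          ((((n - 2 * ⌊zf p n - ε⌋.toNat).choose ⌊zf p n - ε⌋.toNat : ℝ) /
            ((n.factorial : ℝ) / ((⌊zf p n - ε⌋.toNat.factorial : ℝ) *
              ⌊zf p n - ε⌋.toNat.factorial * (n - 2 * ⌊zf p n - ε⌋.toNat).factorial))) *
            (p⁻¹) ^ (⌊zf p n - ε⌋.toNat.choose 2)))
      atTop (nhds 0) :=
  stmt11_general p ε hp0 hp1 hε
end
end

section
/- Fix a real number p with 0 < p < 1, ε with 0 < ε < 1/2, and λ with 0 < λ < 1/(1 + e·q) where q = 1/p; for each n let r = r(n) = ⌊z(n,p) − ε⌋. Then there exists N > 0 such that for all n ≥ N the following holds for all α ∈ D and α' ∈ D obtained from α by adding 1 to one coordinate, say the coordinate whose value in α is x: (1) if x ≤ (1−λ)·log_q n then T_α > T_{α'}; (2) if x ≥ (1+λ)·log_q n then T_α < T_{α'}. -/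
open Finset Filter

noncomputable section

/-- Increase the `i`-th coordinate of `α` by `1`. -/
def bump (i : Fin 4) (α : ℕ × ℕ × ℕ × ℕ) : ℕ × ℕ × ℕ × ℕ :=
  if i.val = 0 then (α.1 + 1, α.2.1, α.2.2.1, α.2.2.2)
  else if i.val = 1 then (α.1, α.2.1 + 1, α.2.2.1, α.2.2.2)
  else if i.val = 2 then (α.1, α.2.1, α.2.2.1 + 1, α.2.2.2)
  else (α.1, α.2.1, α.2.2.1, α.2.2.2 + 1)

/-- The `i`-th coordinate of `α`. -/
def coordv (i : Fin 4) (α : ℕ × ℕ × ℕ × ℕ) : ℕ :=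
  if i.val = 0 then α.1 else if i.val = 1 then α.2.1
  else if i.val = 2 then α.2.2.1 else α.2.2.2

open Real

/-! Raising the coordinate `x` of `α` multiplies `T_α` by `A·B·q^x / ((x+1)(k+1))`, where
`A, B ∈ [1, r]` are the two slacks `r − x − ·` of the constraints of `D` involving `x`, and
`k = n − 4r + a + b + c + d ∈ [n − 4r, n − 2r]`. Since `r ≤ 3 log_q n`, the factors `A`, `B`,
`x + 1` are `O(log_q n)` while `k ≍ n`, so the ratio is `< 1` once `q^x ≤ n^{1−λ}` and `> 1` once
`q^x ≥ n^{1+λ}`, as soon as `n^λ > 18 (log_q n)²`. The symmetries `(a,b,c,d) ↦ (b,a,d,c)` and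
`(a,b,c,d) ↦ (c,d,a,b)` of `T` reduce the ratio computation to the first coordinate. -/

section Ratio

variable (n r : ℕ) (p : ℝ)

lemma mem_Dset {a b c d : ℕ} :
    (a, b, c, d) ∈ Dset r ↔ a + b ≤ r ∧ a + c ≤ r ∧ c + d ≤ r ∧ b + d ≤ r := by
  simp only [Dset, mem_filter, mem_product, mem_range]
  omega

lemma Ta_pos (hp : 0 < p) (α : ℕ × ℕ × ℕ × ℕ) : 0 < Ta n r p α := by
  obtain ⟨a, b, c, d⟩ := α
  unfold Ta Fa
  positivity

lemma Ta_swap_within_pairs (a b c d : ℕ) : Ta n r p (b, a, d, c) = Ta n r p (a, b, c, d) := by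
  have h₁ : r - b - a = r - a - b := by omega
  have h₂ : r - d - c = r - c - d := by omega
  have h₃ : n - 4 * r + b + a + d + c = n - 4 * r + a + b + c + d := by omega
  simp only [Ta, Fa, La, h₁, h₂, h₃]
  ring

lemma Ta_swap_pairs (a b c d : ℕ) : Ta n r p (c, d, a, b) = Ta n r p (a, b, c, d) := by
  have h₁ : r - c - a = r - a - c := by omega
  have h₂ : r - d - b = r - b - d := by omega
  have h₃ : n - 4 * r + c + d + a + b = n - 4 * r + a + b + c + d := by omega
  simp only [Ta, Fa, La, h₁, h₂, h₃]
  ring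

lemma Ta_succ_fst_mul (a b c d : ℕ) (hb : a + 1 + b ≤ r) (hc : a + 1 + c ≤ r) :
    Ta n r p (a + 1, b, c, d) * ((a + 1) * ((n - 4 * r + a + b + c + d : ℕ) + 1)) =
      Ta n r p (a, b, c, d) * ((r - a - b : ℕ) * (r - a - c : ℕ) * p⁻¹ ^ a) := by
  obtain ⟨u, hu, hu'⟩ : ∃ u, r - a - b = u + 1 ∧ r - (a + 1) - b = u :=
    ⟨r - (a + 1) - b, by omega, rfl⟩
  obtain ⟨v, hv, hv'⟩ : ∃ v, r - a - c = v + 1 ∧ r - (a + 1) - c = v :=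
    ⟨r - (a + 1) - c, by omega, rfl⟩
  have hk : n - 4 * r + (a + 1) + b + c + d = n - 4 * r + a + b + c + d + 1 := by omega
  have hLa : La (a + 1, b, c, d) = La (a, b, c, d) + a := by
    simp only [La, Nat.choose_succ_succ, Nat.choose_one_right]
    ring
  simp only [Ta, Fa, hLa, hu, hu', hv, hv', hk, Nat.factorial_succ, pow_add]
  push_cast
  field_simp

lemma exists_Ta_bump_mul_eq (i : Fin 4) (α : ℕ × ℕ × ℕ × ℕ) (h : bump i α ∈ Dset r) :
    ∃ A B k : ℕ, 0 < A ∧ A ≤ r ∧ 0 < B ∧ B ≤ r ∧ coordv i α < r ∧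
      n - 4 * r ≤ k ∧ k ≤ n - 4 * r + 2 * r ∧
      Ta n r p (bump i α) * ((coordv i α + 1) * (k + 1)) =
        Ta n r p α * (A * B * p⁻¹ ^ coordv i α) := by
  obtain ⟨a, b, c, d⟩ := α
  fin_cases i <;>
    simp only [bump, coordv, ↓reduceIte, one_ne_zero, OfNat.ofNat_ne_zero, OfNat.ofNat_ne_one,
      Nat.succ_ne_self, mem_Dset] at h ⊢
  · have e := Ta_succ_fst_mul n r p a b c d (by omega) (by omega)
    refine ⟨_, _, _, ?_, ?_, ?_, ?_, ?_, ?_, ?_, e⟩ <;> omega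
  · have e := Ta_succ_fst_mul n r p b a d c (by omega) (by omega)
    rw [Ta_swap_within_pairs n r p a (b + 1), Ta_swap_within_pairs n r p a b] at e
    refine ⟨_, _, _, ?_, ?_, ?_, ?_, ?_, ?_, ?_, e⟩ <;> omega
  · have e := Ta_succ_fst_mul n r p c d a b (by omega) (by omega)
    rw [Ta_swap_pairs n r p a b (c + 1), Ta_swap_pairs n r p a b c] at e
    refine ⟨_, _, _, ?_, ?_, ?_, ?_, ?_, ?_, ?_, e⟩ <;> omega
  · have e := Ta_succ_fst_mul n r p d c b a (by omega) (by omega)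
    rw [Ta_swap_pairs n r p b a (d + 1), Ta_swap_pairs n r p b a d,
      Ta_swap_within_pairs n r p a b c (d + 1), Ta_swap_within_pairs n r p a b c d] at e
    refine ⟨_, _, _, ?_, ?_, ?_, ?_, ?_, ?_, ?_, e⟩ <;> omega

end Ratio

section Asymptotics

lemma eventually_mul_sq_logb_lt_rpow (C b : ℝ) {s : ℝ} (hs : 0 < s) :
    ∀ᶠ x : ℝ in atTop, C * logb b x ^ 2 < x ^ s := by
  have h : (fun x => C * logb b x ^ 2) =o[atTop] fun x => x ^ s := by
    refine (((isLittleO_log_rpow_atTop (half_pos hs)).mul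
      (isLittleO_log_rpow_atTop (half_pos hs))).const_mul_left (C / log b ^ 2)).congr' ?_ ?_
    · exact .of_eq (funext fun x => by simp only [logb]; ring)
    · filter_upwards [eventually_gt_atTop 0] with x hx
      rw [← rpow_add hx, add_halves]
  filter_upwards [h.eventuallyLT_norm_of_eventually_pos ((eventually_gt_atTop 0).mono
    fun x hx => by simpa using (rpow_pos_of_pos hx s).ne'), eventually_gt_atTop 0] with x hlt hx
  rw [norm_eq_abs, norm_eq_abs, abs_of_pos (rpow_pos_of_pos hx s)] at hlt
  exact (le_abs_self _).trans_lt hlt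

lemma eventually_toNat_floor_zf_sub_le {p : ℝ} (hq : 1 < p⁻¹) (c : ℝ) :
    ∀ᶠ n : ℕ in atTop, (⌊zf p n - c⌋.toNat : ℝ) ≤ 3 * logb p⁻¹ n := by
  filter_upwards [((tendsto_logb_atTop hq).comp tendsto_natCast_atTop_atTop).eventually_ge_atTop
    (max 1 (2 * logb p⁻¹ (exp 1 / 2) + 1 - c))]
    with n (hn : max 1 (2 * logb p⁻¹ (exp 1 / 2) + 1 - c) ≤ logb p⁻¹ n)
  have hn₁ := le_of_max_le_left hn
  have hn₂ := le_of_max_le_right hn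
  have hlog : 0 ≤ logb p⁻¹ (logb p⁻¹ n) := logb_nonneg hq hn₁
  rw [Int.floor_toNat]
  calc (⌊zf p n - c⌋₊ : ℝ) ≤ ⌊3 * logb p⁻¹ n⌋₊ := by
        gcongr
        unfold zf
        linarith
    _ ≤ 3 * logb p⁻¹ n := Nat.floor_le (by linarith)

end Asymptotics

section Bounds

variable {q lam : ℝ} {n r x A B k : ℕ}

lemma pos_and_eight_mul_le (hlam : lam < 1) (hL : 2 ≤ logb q n) (hr : r ≤ 3 * logb q n)
    (hn : 18 * logb q n ^ 2 < n ^ lam) : 0 < n ∧ 8 * r ≤ n := by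
  have hn₀ : 0 < n := Nat.pos_of_ne_zero (by rintro rfl; simp at hL; linarith)
  have : (n : ℝ) ^ lam ≤ n := rpow_le_self_of_one_le (by exact_mod_cast hn₀) hlam.le
  exact ⟨hn₀, by exact_mod_cast (show (8 * r : ℝ) ≤ n by nlinarith)⟩

lemma mul_mul_pow_lt_of_le_mul_logb (hq : 1 < q) (hlam : lam < 1) (hL : 2 ≤ logb q n)
    (hr : r ≤ 3 * logb q n) (hn : 18 * logb q n ^ 2 < n ^ lam) (hA : A ≤ r) (hB : B ≤ r)
    (hk : n - 4 * r ≤ k) (hx : x ≤ (1 - lam) * logb q n) :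
    A * B * q ^ x < (x + 1) * ((k : ℝ) + 1) := by
  obtain ⟨hn₀, h8r⟩ := pos_and_eight_mul_le hlam hL hr hn
  have hn₀' : (0 : ℝ) < n := by exact_mod_cast hn₀
  have hQ : q ^ x ≤ (n : ℝ) ^ (1 - lam) := by
    rw [← rpow_natCast, ← le_logb_iff_rpow_le hq (by positivity),
      logb_rpow_eq_mul_logb_of_pos hn₀']
    linarith
  have hA' : (A : ℝ) ≤ 3 * logb q n := le_trans (by exact_mod_cast hA) hr
  have hB' : (B : ℝ) ≤ 3 * logb q n := le_trans (by exact_mod_cast hB) hr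
  have hk' : (n : ℝ) / 2 ≤ k + 1 := by
    rw [div_le_iff₀ two_pos]
    exact_mod_cast (by omega : n ≤ (k + 1) * 2)
  calc (A * B * q ^ x : ℝ) ≤ (3 * logb q n) * (3 * logb q n) * n ^ (1 - lam) := by gcongr
    _ < n ^ lam / 2 * n ^ (1 - lam) := by gcongr; linarith
    _ = n / 2 := by rw [div_mul_eq_mul_div, ← rpow_add hn₀']; simp
    _ ≤ k + 1 := hk'
    _ ≤ (x + 1) * ((k : ℝ) + 1) := le_mul_of_one_le_left (by positivity) (by simp)

lemma lt_mul_mul_pow_of_mul_logb_le (hq : 1 < q) (hlam : lam < 1) (hL : 2 ≤ logb q n)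
    (hr : r ≤ 3 * logb q n) (hn : 18 * logb q n ^ 2 < n ^ lam) (hA : 0 < A) (hB : 0 < B)
    (hxr : x < r) (hk : k ≤ n - 4 * r + 2 * r) (hx : (1 + lam) * logb q n ≤ x) :
    (x + 1) * ((k : ℝ) + 1) < A * B * q ^ x := by
  obtain ⟨hn₀, h8r⟩ := pos_and_eight_mul_le hlam hL hr hn
  have hn₀' : (0 : ℝ) < n := by exact_mod_cast hn₀
  have hQ : (n : ℝ) ^ (1 + lam) ≤ q ^ x := by
    rw [← rpow_natCast, ← logb_le_iff_le_rpow hq (by positivity),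
      logb_rpow_eq_mul_logb_of_pos hn₀']
    linarith
  have hx' : (x : ℝ) + 1 ≤ 3 * logb q n := le_trans (by exact_mod_cast hxr) hr
  have hk' : (k : ℝ) + 1 ≤ n := by exact_mod_cast (by omega : k + 1 ≤ n)
  have hAB : (1 : ℝ) ≤ A * B := by exact_mod_cast Nat.one_le_iff_ne_zero.mpr (by positivity)
  calc (x + 1) * ((k : ℝ) + 1) ≤ 3 * logb q n * n := by gcongr
    _ < n ^ lam * n := by gcongr; nlinarith
    _ = n ^ (1 + lam) := by rw [rpow_add hn₀', rpow_one]; ring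
    _ ≤ q ^ x := hQ
    _ ≤ A * B * q ^ x := le_mul_of_one_le_left (by positivity) hAB

end Bounds

theorem stmt15_general (p ε lam : ℝ) (hp0 : 0 < p) (hp1 : p < 1)
    (hlam0 : 0 < lam) (hlam1 : lam < 1 / (1 + Real.exp 1 * p⁻¹)) :
    ∃ N : ℕ, ∀ n : ℕ, N ≤ n → ∀ i : Fin 4, ∀ α : ℕ × ℕ × ℕ × ℕ,
      α ∈ Dset ⌊zf p n - ε⌋.toNat → bump i α ∈ Dset ⌊zf p n - ε⌋.toNat →
      (((coordv i α : ℝ) ≤ (1 - lam) * Real.logb p⁻¹ n →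
          Ta n ⌊zf p n - ε⌋.toNat p (bump i α) < Ta n ⌊zf p n - ε⌋.toNat p α) ∧
       ((1 + lam) * Real.logb p⁻¹ n ≤ (coordv i α : ℝ) →
          Ta n ⌊zf p n - ε⌋.toNat p α < Ta n ⌊zf p n - ε⌋.toNat p (bump i α))) := by
  have hq : 1 < p⁻¹ := one_lt_inv_iff₀.mpr ⟨hp0, hp1⟩
  have hlam : lam < 1 := hlam1.trans <| (div_lt_one (by positivity)).mpr <|
    lt_add_of_pos_right 1 (mul_pos (exp_pos 1) (inv_pos.mpr hp0))
  obtain ⟨N, hN⟩ := eventually_atTop.mp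
    ((((tendsto_logb_atTop hq).comp tendsto_natCast_atTop_atTop).eventually_ge_atTop 2).and
      ((eventually_toNat_floor_zf_sub_le hq ε).and
        (tendsto_natCast_atTop_atTop.eventually (eventually_mul_sq_logb_lt_rpow 18 p⁻¹ hlam0))))
  refine ⟨N, fun n hNn i α _ hbump => ?_⟩
  obtain ⟨hL, hr, hn⟩ := hN n hNn
  obtain ⟨A, B, k, hA, hAr, hB, hBr, hxr, hk, hk', hratio⟩ :=
    exists_Ta_bump_mul_eq n _ p i α hbump
  have hT := Ta_pos n ⌊zf p n - ε⌋.toNat p hp0 α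
  have hD : 0 < ((coordv i α : ℝ) + 1) * ((k : ℝ) + 1) := by positivity
  refine ⟨fun hx => lt_of_mul_lt_mul_right ?_ hD.le, fun hx => lt_of_mul_lt_mul_right ?_ hD.le⟩
  · exact hratio.trans_lt <| mul_lt_mul_of_pos_left
      (mul_mul_pow_lt_of_le_mul_logb hq hlam hL hr hn hAr hBr hk hx) hT
  · exact (mul_lt_mul_of_pos_left
      (lt_mul_mul_pow_of_mul_logb_le hq hlam hL hr hn hA hB hxr hk' hx) hT).trans_eq hratio.symm

/-- For `r = r(n) = ⌊z(n,p) − ε⌋` there exists `N` such that for all `n ≥ N`, if `α' ∈ D`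
is obtained from `α ∈ D` by adding `1` to one coordinate, whose value is `x`, then:
(1) if `x ≤ (1−λ)·log_q n` then `T_α > T_{α'}`;
(2) if `x ≥ (1+λ)·log_q n` then `T_α < T_{α'}`. -/
theorem stmt15 (p ε lam : ℝ) (hp0 : 0 < p) (hp1 : p < 1) (hε : 0 < ε) (hε' : ε < 1/2)
    (hlam0 : 0 < lam) (hlam1 : lam < 1 / (1 + Real.exp 1 * p⁻¹)) :
    ∃ N : ℕ, ∀ n : ℕ, N ≤ n → ∀ i : Fin 4, ∀ α : ℕ × ℕ × ℕ × ℕ,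
      α ∈ Dset ⌊zf p n - ε⌋.toNat → bump i α ∈ Dset ⌊zf p n - ε⌋.toNat →
      (((coordv i α : ℝ) ≤ (1 - lam) * Real.logb p⁻¹ n →
          Ta n ⌊zf p n - ε⌋.toNat p (bump i α) < Ta n ⌊zf p n - ε⌋.toNat p α) ∧
       ((1 + lam) * Real.logb p⁻¹ n ≤ (coordv i α : ℝ) →
          Ta n ⌊zf p n - ε⌋.toNat p α < Ta n ⌊zf p n - ε⌋.toNat p (bump i α))) :=
  stmt15_general p ε lam hp0 hp1 hlam0 hlam1

end
end
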